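/- arXiv:1704.05001 — 11 statements merged into one kernel-verified Lean document; each statement's English description precedes it below -/
import Mathlib

section
/- Let A = [[A_ff, A_fc],[A_cf, A_cc]] with A_ff invertible, let P = [[W],[I]] and R = [Z, I], and assume K = R·A·P is invertible. Then the C-component of (I − P·K⁻¹·R·A)·e vanishes for every vector e on F ⊕ C if and only if Z = −A_cf·A_ff⁻¹. Moreover, when Z = −A_cf·A_ff⁻¹, the coarse-grid correction error satisfies (I − P·K⁻¹·R·A)·e = (e_f − W·e_c, 0) for every e = (e_f, e_c). -/
open Matrix

/-!
With `R·A = [X, Y]`, where `X = Z·A_ff + A_cf` and `Y = Z·A_fc + A_cc`, the coarse operator is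
`K = X·W + Y`, and `K⁻¹·K = I` rearranges the C-rows of `I − P·K⁻¹·R·A` into
`K⁻¹·X·[−I, W]`. Since `[−I, W]` has a right inverse and `K` is invertible, these rows vanish
exactly when `X = 0`, i.e. when `Z = −A_cf·A_ff⁻¹`. The F-rows are `[I, −W]` plus `W` times the
C-rows, which gives the formula for the error.
-/

namespace Matrix

variable {l m n α : Type*} [CommRing α]

lemma fromCols_one_mul_fromBlocks [Fintype m] [Fintype n] [DecidableEq n] (Z : Matrix n m α)
    (A₁₁ : Matrix m m α) (A₁₂ : Matrix m n α) (A₂₁ : Matrix n m α) (A₂₂ : Matrix n n α) :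
    fromCols Z (1 : Matrix n n α) * fromBlocks A₁₁ A₁₂ A₂₁ A₂₂ =
      fromCols (Z * A₁₁ + A₂₁) (Z * A₁₂ + A₂₂) := by
  rw [fromCols_mul_fromBlocks, Matrix.one_mul, Matrix.one_mul]

lemma fromCols_mul_fromRows_one [Fintype m] [Fintype n] [DecidableEq n] (X : Matrix n m α)
    (Y : Matrix n n α) (W : Matrix m n α) :
    fromCols X Y * fromRows W (1 : Matrix n n α) = X * W + Y := by
  rw [fromCols_mul_fromRows, Matrix.mul_one]

lemma one_sub_fromRows_one_mul [Fintype n] [DecidableEq m] [DecidableEq n] (W : Matrix m n α)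
    (T : Matrix n (m ⊕ n) α) :
    1 - fromRows W 1 * T =
      fromRows (fromCols 1 (-W) + W * (fromCols 0 1 - T)) (fromCols 0 1 - T) := by
  rw [Matrix.mul_sub, mul_fromCols, Matrix.mul_zero, Matrix.mul_one, fromRows_mul,
    Matrix.one_mul]
  ext (i | i) (j | j) <;> simp [one_apply, sub_eq_add_neg]

lemma fromCols_zero_one_sub_inv_mul_fromCols [Fintype m] [Fintype n] [DecidableEq m]
    [DecidableEq n] {X : Matrix n m α} {Y : Matrix n n α} {W : Matrix m n α}
    (hK : IsUnit (X * W + Y)) :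
    fromCols 0 1 - (X * W + Y)⁻¹ * fromCols X Y = (X * W + Y)⁻¹ * X * fromCols (-1) W := by
  have hinv : (X * W + Y)⁻¹ * X * W + (X * W + Y)⁻¹ * Y = 1 := by
    rw [Matrix.mul_assoc, ← Matrix.mul_add, nonsing_inv_mul _ ((isUnit_iff_isUnit_det _).1 hK)]
  rw [mul_fromCols, mul_fromCols, eq_sub_of_add_eq hinv]
  ext i (j | j) <;> simp

lemma mul_fromCols_neg_one_eq_zero_iff [Fintype m] [DecidableEq m]
    (M : Matrix l m α) (W : Matrix m n α) :
    M * fromCols (-1 : Matrix m m α) W = 0 ↔ M = 0 := by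
  rw [mul_fromCols, ← fromCols_zero, fromCols_ext_iff, Matrix.mul_neg, Matrix.mul_one,
    neg_eq_zero]
  exact ⟨And.left, fun h => ⟨h, by rw [h, Matrix.zero_mul]⟩⟩

lemma nonsing_inv_mul_eq_zero_iff [Fintype n] [DecidableEq n] {K : Matrix n n α} (hK : IsUnit K)
    (X : Matrix n m α) : K⁻¹ * X = 0 ↔ X = 0 := by
  refine ⟨fun h => ?_, fun h => by rw [h, Matrix.mul_zero]⟩
  rw [← mul_nonsing_inv_cancel_left (A := K) X ((isUnit_iff_isUnit_det K).1 hK), h,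
    Matrix.mul_zero]

lemma mul_add_eq_zero_iff_eq_neg_mul_inv [Fintype m] [DecidableEq m] {Z : Matrix n m α}
    {A : Matrix m m α} {B : Matrix n m α} (hA : IsUnit A) :
    Z * A + B = 0 ↔ Z = -(B * A⁻¹) := by
  have hdet := (isUnit_iff_isUnit_det A).1 hA
  rw [add_eq_zero_iff_eq_neg, ← Matrix.neg_mul]
  constructor
  · intro h; rw [← h, Matrix.mul_nonsing_inv_cancel_right _ _ hdet]
  · rintro rfl; rw [Matrix.nonsing_inv_mul_cancel_right _ _ hdet]

end Matrix

/-- **Ideal restriction (Lemma 2.1).** Coarse-grid correction `I − P·K⁻¹·R·A` is exact at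
C-points for every error vector if and only if `Z = −A_cf·A_ff⁻¹`; moreover, in that case
`(I − P·K⁻¹·R·A)·e = (e_f − W·e_c, 0)`. -/
theorem ideal_restriction_exact_at_C_points
    {F C : Type*} [Fintype F] [Fintype C] [DecidableEq F] [DecidableEq C]
    (Aff : Matrix F F ℝ) (Afc : Matrix F C ℝ) (Acf : Matrix C F ℝ) (Acc : Matrix C C ℝ)
    (W : Matrix F C ℝ) (Z : Matrix C F ℝ)
    (A : Matrix (F ⊕ C) (F ⊕ C) ℝ) (hA : A = fromBlocks Aff Afc Acf Acc)
    (P : Matrix (F ⊕ C) C ℝ) (hP : P = fromRows W 1)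
    (R : Matrix C (F ⊕ C) ℝ) (hR : R = fromCols Z 1)
    (K : Matrix C C ℝ) (hK : K = R * A * P)
    (hAff : IsUnit Aff) (hKinv : IsUnit K) :
    ((∀ e : (F ⊕ C) → ℝ, ∀ j : C, ((1 - P * K⁻¹ * R * A) *ᵥ e) (Sum.inr j) = 0) ↔
        Z = -(Acf * Aff⁻¹)) ∧
    (Z = -(Acf * Aff⁻¹) →
      ∀ e : (F ⊕ C) → ℝ,
        (1 - P * K⁻¹ * R * A) *ᵥ e =
          Sum.elim (fun i => e (Sum.inl i) - (W *ᵥ fun j => e (Sum.inr j)) i)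
            (fun _ => 0)) := by
  have hRA : R * A = fromCols (Z * Aff + Acf) (Z * Afc + Acc) := by
    rw [hR, hA, fromCols_one_mul_fromBlocks]
  have hKXY : K = (Z * Aff + Acf) * W + (Z * Afc + Acc) := by
    rw [hK, hRA, hP, fromCols_mul_fromRows_one]
  set S := K⁻¹ * (Z * Aff + Acf) * fromCols (-1 : Matrix F F ℝ) W
  have hE : 1 - P * K⁻¹ * R * A = fromRows (fromCols 1 (-W) + W * S) S := by
    have hC := fromCols_zero_one_sub_inv_mul_fromCols (W := W) (hKXY ▸ hKinv)
    rw [← hKXY] at hC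
    rw [Matrix.mul_assoc, hRA, hP, Matrix.mul_assoc, one_sub_fromRows_one_mul, hC]
  have hS : S = 0 ↔ Z = -(Acf * Aff⁻¹) := by
    rw [mul_fromCols_neg_one_eq_zero_iff, nonsing_inv_mul_eq_zero_iff hKinv,
      mul_add_eq_zero_iff_eq_neg_mul_inv hAff]
  refine ⟨?_, fun hZ e => ?_⟩
  · simp only [hE, fromRows_mulVec, Sum.elim_inr, ← hS, ext_iff_mulVec, zero_mulVec, funext_iff,
      Pi.zero_apply]
  · rw [hE, hS.2 hZ, Matrix.mul_zero, add_zero, fromRows_mulVec, fromCols_mulVec, one_mulVec,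
      neg_mulVec, zero_mulVec]
    ext (i | j) <;> simp [sub_eq_add_neg, Function.comp_def]
end

section
/- Let A = [[A_ff, A_fc],[A_cf, A_cc]] with A_ff invertible, let W = −A_ff⁻¹·A_fc (ideal interpolation), let P = [[W],[I]] and R = [Z, I] for any C×F matrix Z, and assume K = R·A·P is invertible. Then for every vector e = (e_f, e_c) satisfying A_ff·e_f + A_fc·e_c = 0 (i.e., with zero residual at F-points), one has (I − P·K⁻¹·R·A)·e = 0. Hence an exact solve on F-points followed by coarse-grid correction with P_ideal is an exact two-level solver, independent of Z. -/
open Matrix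

/-! With `W` the ideal interpolation, zero residual at the F-points says exactly that
`e_f = W e_c`, i.e. `e = P e_c` lies in the range of `P`. On the other hand
`P K⁻¹ R A` with `K = R A P` restricts to the identity on the range of `P`, whatever `R` is,
so `I − P K⁻¹ R A` kills `e`. -/

namespace Matrix

variable {n m 𝕜 : Type*} [Fintype n] [Fintype m] [CommRing 𝕜]

theorem mul_nonsing_inv_mul_mul_self [DecidableEq m] {P : Matrix n m 𝕜} {Q : Matrix m n 𝕜}
    (h : IsUnit (Q * P)) : P * (Q * P)⁻¹ * Q * P = P := by
  rw [Matrix.mul_assoc _ Q P, Matrix.mul_assoc,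
    nonsing_inv_mul _ ((isUnit_iff_isUnit_det _).mp h), Matrix.mul_one]

theorem one_sub_mul_nonsing_inv_mul_mulVec_mulVec {P : Matrix n m 𝕜} {Q : Matrix m n 𝕜}
    [DecidableEq n] [DecidableEq m] (h : IsUnit (Q * P)) (v : m → 𝕜) :
    (1 - P * (Q * P)⁻¹ * Q) *ᵥ (P *ᵥ v) = 0 := by
  rw [mulVec_mulVec, Matrix.sub_mul, Matrix.one_mul, mul_nonsing_inv_mul_mul_self h, sub_self,
    zero_mulVec]

theorem eq_neg_nonsing_inv_mul_mulVec_of_mulVec_add_mulVec_eq_zero [DecidableEq n]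
    {A : Matrix n n 𝕜} {B : Matrix n m 𝕜} (hA : IsUnit A) {x : n → 𝕜} {y : m → 𝕜}
    (h : A *ᵥ x + B *ᵥ y = 0) : x = -(A⁻¹ * B) *ᵥ y := by
  calc x = A⁻¹ *ᵥ (A *ᵥ x) := by
        rw [mulVec_mulVec, nonsing_inv_mul _ ((isUnit_iff_isUnit_det _).mp hA), one_mulVec]
    _ = -(A⁻¹ * B) *ᵥ y := by
        rw [eq_neg_of_add_eq_zero_left h, mulVec_neg, mulVec_mulVec, neg_mulVec]

end Matrix

theorem ideal_interpolation_exact_two_level_general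
    {F C : Type*} [Fintype F] [Fintype C] [DecidableEq F] [DecidableEq C]
    (Aff : Matrix F F ℝ) (Afc : Matrix F C ℝ)
    (hAff : IsUnit Aff)
    (W : Matrix F C ℝ) (hW : W = -(Aff⁻¹ * Afc))
    (A : Matrix (F ⊕ C) (F ⊕ C) ℝ)
    (P : Matrix (F ⊕ C) C ℝ) (hP : P = fromRows W 1)
    (R : Matrix C (F ⊕ C) ℝ)
    (K : Matrix C C ℝ) (hK : K = R * A * P) (hKinv : IsUnit K) :
    ∀ e : (F ⊕ C) → ℝ,
      Aff *ᵥ (fun i => e (Sum.inl i)) + Afc *ᵥ (fun j => e (Sum.inr j)) = 0 →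
      (1 - P * K⁻¹ * R * A) *ᵥ e = 0 := by
  intro e he
  have he_range : e = P *ᵥ (fun j => e (Sum.inr j)) := by
    rw [hP, fromRows_mulVec, one_mulVec, hW,
      ← eq_neg_nonsing_inv_mul_mulVec_of_mulVec_add_mulVec_eq_zero hAff he]
    exact (Sum.elim_comp_inl_inr e).symm
  subst hK
  rw [Matrix.mul_assoc (P * _) R A, he_range]
  exact one_sub_mul_nonsing_inv_mul_mulVec_mulVec hKinv _

/-- **Ideal interpolation (Corollary 2.2).** If `W = −A_ff⁻¹·A_fc`, then for every error
vector `e = (e_f, e_c)` with zero residual at F-points (`A_ff·e_f + A_fc·e_c = 0`),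
coarse-grid correction annihilates the error: `(I − P·K⁻¹·R·A)·e = 0`,
independent of the restriction block `Z`. -/
theorem ideal_interpolation_exact_two_level
    {F C : Type*} [Fintype F] [Fintype C] [DecidableEq F] [DecidableEq C]
    (Aff : Matrix F F ℝ) (Afc : Matrix F C ℝ) (Acf : Matrix C F ℝ) (Acc : Matrix C C ℝ)
    (hAff : IsUnit Aff)
    (W : Matrix F C ℝ) (hW : W = -(Aff⁻¹ * Afc)) (Z : Matrix C F ℝ)
    (A : Matrix (F ⊕ C) (F ⊕ C) ℝ) (hA : A = fromBlocks Aff Afc Acf Acc)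
    (P : Matrix (F ⊕ C) C ℝ) (hP : P = fromRows W 1)
    (R : Matrix C (F ⊕ C) ℝ) (hR : R = fromCols Z 1)
    (K : Matrix C C ℝ) (hK : K = R * A * P) (hKinv : IsUnit K) :
    ∀ e : (F ⊕ C) → ℝ,
      Aff *ᵥ (fun i => e (Sum.inl i)) + Afc *ᵥ (fun j => e (Sum.inr j)) = 0 →
      (1 - P * K⁻¹ * R * A) *ᵥ e = 0 :=
  ideal_interpolation_exact_two_level_general Aff Afc hAff W hW A P hP R K hK hKinv
end

section
/- Let A = [[A_ff, A_fc],[A_cf, A_cc]], P = [[W],[I]], R = [Z, I], and assume K = R·A·P is invertible. Let Δ_F be any F×F matrix, set δ_F = I − Δ_F·A_ff and Ŵ = δ_F·W − Δ_F·A_fc, and let E_F = I − [[Δ_F, 0],[0, 0]]·A be the error-propagation matrix of F-point relaxation. Then E_F·(I − P·K⁻¹·R·A) = I − M⁻¹·A, where M⁻¹ denotes the matrix product [[I, Ŵ],[0, I]] · [[Δ_F, 0],[0, K⁻¹]] · [[I, 0],[Z, I]]. -/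
open Matrix

/-!
Post-relaxation composes with coarse-grid correction like any two stationary iterations:
`(1 - D A)(1 - Q A) = 1 - (D + (1 - D A) Q) A`. With `D = diag(Δ_F, 0)` and `Q = P K⁻¹ R`,
relaxation maps `P` to the interpolation `[[Ŵ], [I]]`, and `diag(Δ_F, 0) + [[Ŵ], [I]] K⁻¹ [Z, I]`
is exactly the block factorisation of `M⁻¹`.
-/

theorem one_sub_mul_mul_one_sub_mul {α : Type*} [Ring α] (a b x : α) :
    (1 - a * x) * (1 - b * x) = 1 - (a + (1 - a * x) * b) * x := by
  noncomm_ring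

section Blocks

variable {F C α : Type*} [Fintype F] [Fintype C] [DecidableEq F] [DecidableEq C] [Ring α]

/- In `fromRows X (1 : Matrix C C α)` the ascription is needed: with the type of `1` unknown,
the product elaborates with the `CStarMatrix` multiplication and `Matrix` lemmas no longer apply. -/

theorem fromBlocks_relaxation_mul_fromRows (Aff : Matrix F F α) (Afc : Matrix F C α)
    (Acf : Matrix C F α) (Acc : Matrix C C α) (W : Matrix F C α) (ΔF : Matrix F F α) :
    (1 - fromBlocks ΔF 0 0 0 * fromBlocks Aff Afc Acf Acc) * fromRows W (1 : Matrix C C α) =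
      fromRows ((1 - ΔF * Aff) * W - ΔF * Afc) 1 := by
  rw [← fromBlocks_one, fromBlocks_multiply, sub_eq_add_neg, fromBlocks_neg, fromBlocks_add,
    fromBlocks_mul_fromRows]
  simp only [Matrix.zero_mul, Matrix.mul_one, Matrix.one_mul, Matrix.add_mul, Matrix.neg_mul,
    Matrix.mul_assoc, add_zero, neg_zero, zero_add, sub_eq_add_neg]

theorem fromBlocks_unitUpper_mul_blockDiag_mul_unitLower (X : Matrix F C α) (Z : Matrix C F α)
    (D : Matrix F F α) (E : Matrix C C α) :
    fromBlocks 1 X 0 1 * fromBlocks D 0 0 E * fromBlocks 1 0 Z 1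
      = fromBlocks D 0 0 0 + fromRows X (1 : Matrix C C α) * E * fromCols Z 1 := by
  rw [fromRows_mul, fromRows_mul_fromCols]
  simp only [fromBlocks_multiply, fromBlocks_add, Matrix.mul_one, Matrix.one_mul,
    Matrix.mul_zero, Matrix.zero_mul, add_zero, zero_add, Matrix.mul_assoc]

end Blocks

theorem two_grid_error_prop_eq_one_sub_Minv_mul_general
    {F C : Type*} [Fintype F] [Fintype C] [DecidableEq F] [DecidableEq C]
    (Aff : Matrix F F ℝ) (Afc : Matrix F C ℝ) (Acf : Matrix C F ℝ) (Acc : Matrix C C ℝ)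
    (W : Matrix F C ℝ) (Z : Matrix C F ℝ) (ΔF : Matrix F F ℝ)
    (A : Matrix (F ⊕ C) (F ⊕ C) ℝ) (hA : A = fromBlocks Aff Afc Acf Acc)
    (P : Matrix (F ⊕ C) C ℝ) (hP : P = fromRows W 1)
    (R : Matrix C (F ⊕ C) ℝ) (hR : R = fromCols Z 1)
    (K : Matrix C C ℝ)
    (δF : Matrix F F ℝ) (hδF : δF = 1 - ΔF * Aff)
    (Weff : Matrix F C ℝ) (hWeff : Weff = δF * W - ΔF * Afc)
    (EF : Matrix (F ⊕ C) (F ⊕ C) ℝ) (hEF : EF = 1 - fromBlocks ΔF 0 0 0 * A)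
    (Minv : Matrix (F ⊕ C) (F ⊕ C) ℝ)
    (hMinv : Minv = fromBlocks 1 Weff 0 1 * fromBlocks ΔF 0 0 K⁻¹ * fromBlocks 1 0 Z 1) :
    EF * (1 - P * K⁻¹ * R * A) = 1 - Minv * A := by
  have hEFP : EF * P = fromRows Weff 1 := by
    rw [hEF, hA, hP, hWeff, hδF, fromBlocks_relaxation_mul_fromRows]
  rw [hMinv, fromBlocks_unitUpper_mul_blockDiag_mul_unitLower, ← hEFP, ← hR, hEF,
    one_sub_mul_mul_one_sub_mul]
  simp only [Matrix.mul_assoc]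

/-- The two-grid error propagator `E_F·(I − P·K⁻¹·R·A)` with post-F-relaxation can be written
as `I − M⁻¹·A`, where
`M⁻¹ = [[I, Weff],[0, I]]·[[Δ_F, 0],[0, K⁻¹]]·[[I, 0],[Z, I]]` and
`Weff = (I − Δ_F·A_ff)·W − Δ_F·A_fc`. -/
theorem two_grid_error_prop_eq_one_sub_Minv_mul
    {F C : Type*} [Fintype F] [Fintype C] [DecidableEq F] [DecidableEq C]
    (Aff : Matrix F F ℝ) (Afc : Matrix F C ℝ) (Acf : Matrix C F ℝ) (Acc : Matrix C C ℝ)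
    (W : Matrix F C ℝ) (Z : Matrix C F ℝ) (ΔF : Matrix F F ℝ)
    (A : Matrix (F ⊕ C) (F ⊕ C) ℝ) (hA : A = fromBlocks Aff Afc Acf Acc)
    (P : Matrix (F ⊕ C) C ℝ) (hP : P = fromRows W 1)
    (R : Matrix C (F ⊕ C) ℝ) (hR : R = fromCols Z 1)
    (K : Matrix C C ℝ) (hK : K = R * A * P) (hKinv : IsUnit K)
    (δF : Matrix F F ℝ) (hδF : δF = 1 - ΔF * Aff)
    (Weff : Matrix F C ℝ) (hWeff : Weff = δF * W - ΔF * Afc)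
    (EF : Matrix (F ⊕ C) (F ⊕ C) ℝ) (hEF : EF = 1 - fromBlocks ΔF 0 0 0 * A)
    (Minv : Matrix (F ⊕ C) (F ⊕ C) ℝ)
    (hMinv : Minv = fromBlocks 1 Weff 0 1 * fromBlocks ΔF 0 0 K⁻¹ * fromBlocks 1 0 Z 1) :
    EF * (1 - P * K⁻¹ * R * A) = 1 - Minv * A :=
  two_grid_error_prop_eq_one_sub_Minv_mul_general Aff Afc Acf Acc W Z ΔF A hA P hP R hR K δF hδF
    Weff hWeff EF hEF Minv hMinv
end

section
/- Let A = [[A_ff, A_fc],[A_cf, A_cc]], P = [[W],[I]], R = [Z, I], assume K = R·A·P is invertible, let Δ_F be any F×F matrix, and set δ_F = I − Δ_F·A_ff, δ_P = A_ff·W + A_fc, δ_R = Z·A_ff + A_cf, Ŵ = δ_F·W − Δ_F·A_fc. Let E = E_F·(I − P·K⁻¹·R·A) with E_F = I − [[Δ_F, 0],[0, 0]]·A, and let G = δ_F + Δ_F·δ_P·K⁻¹·δ_R. Then for every integer k ≥ 1, E^k = U · G^(k−1) · V, where U is the (F⊕C)×F block-column matrix with F-block δ_F − Ŵ·K⁻¹·δ_R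 and C-block −K⁻¹·δ_R, and V is the F×(F⊕C) block-row matrix [I, −W]. -/
open Matrix

/-!
The coarse-grid correction `I − P·K⁻¹·R·A` annihilates the range of `P = [W; I]`, which is the
kernel of `V = [I, −W]`, so it factors as `N·V`; multiplying by `E_F` on the left keeps this
form, giving `E = U·V`. Hence `E^(k+1) = U·(V·U)^k·V`, and a block computation gives `V·U = G`.
-/

namespace Matrix

variable {m n α : Type*} [Fintype m] [Fintype n] [DecidableEq m] [DecidableEq n]

theorem mul_pow_succ_eq_mul_mul_pow_mul [Semiring α] (U : Matrix m n α) (V : Matrix n m α) :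
    ∀ k : ℕ, (U * V) ^ (k + 1) = U * (V * U) ^ k * V
  | 0 => by simp
  | k + 1 => by
    rw [pow_succ, mul_pow_succ_eq_mul_mul_pow_mul U V k, pow_succ]
    simp only [Matrix.mul_assoc]

theorem one_sub_fromBlocks_mul_fromBlocks [Ring α] (Δ : Matrix m m α)
    (Aff : Matrix m m α) (Afc : Matrix m n α) (Acf : Matrix n m α) (Acc : Matrix n n α) :
    1 - fromBlocks Δ 0 0 0 * fromBlocks Aff Afc Acf Acc =
      fromBlocks (1 - Δ * Aff) (-(Δ * Afc)) 0 1 := by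
  rw [fromBlocks_multiply, ← fromBlocks_one, sub_eq_add_neg, fromBlocks_neg, fromBlocks_add]
  simp [sub_eq_add_neg]

theorem one_sub_fromRows_mul_inv_mul_fromCols [CommRing α]
    (W : Matrix m n α) (X : Matrix n m α) (Y : Matrix n n α) (hK : IsUnit (X * W + Y)) :
    1 - fromRows W 1 * (X * W + Y)⁻¹ * fromCols X Y =
      fromRows (1 - W * (X * W + Y)⁻¹ * X) (-((X * W + Y)⁻¹ * X)) * fromCols 1 (-W) := by
  set K := X * W + Y
  have hY : Y = K - X * W := by simp [K]
  have hKK : K⁻¹ * K = 1 := nonsing_inv_mul K ((isUnit_iff_isUnit_det K).mp hK)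
  rw [hY, fromRows_mul, fromRows_mul_fromCols, fromRows_mul_fromCols, ← fromBlocks_one,
    sub_eq_add_neg, fromBlocks_neg, fromBlocks_add]
  congr 1 <;>
    simp only [Matrix.mul_sub, Matrix.sub_mul, Matrix.mul_neg, Matrix.neg_mul, Matrix.one_mul,
      Matrix.mul_one, Matrix.mul_assoc, hKK, neg_neg] <;> abel

end Matrix

/-- **Outer-product form of powers of the two-grid error propagator.** With
`E = E_F·(I − P·K⁻¹·R·A)` and `G = δ_F + Δ_F·δ_P·K⁻¹·δ_R`, one has
`E^k = U·G^(k−1)·V` for all `k ≥ 1`, where `U = [[δ_F − Ŵ·K⁻¹·δ_R],[−K⁻¹·δ_R]]`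
and `V = [I, −W]`. -/
theorem error_prop_powers_outer_product
    {F C : Type*} [Fintype F] [Fintype C] [DecidableEq F] [DecidableEq C]
    (Aff : Matrix F F ℝ) (Afc : Matrix F C ℝ) (Acf : Matrix C F ℝ) (Acc : Matrix C C ℝ)
    (W : Matrix F C ℝ) (Z : Matrix C F ℝ) (ΔF : Matrix F F ℝ)
    (A : Matrix (F ⊕ C) (F ⊕ C) ℝ) (hA : A = fromBlocks Aff Afc Acf Acc)
    (P : Matrix (F ⊕ C) C ℝ) (hP : P = fromRows W 1)
    (R : Matrix C (F ⊕ C) ℝ) (hR : R = fromCols Z 1)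
    (K : Matrix C C ℝ) (hK : K = R * A * P) (hKinv : IsUnit K)
    (δF : Matrix F F ℝ) (hδF : δF = 1 - ΔF * Aff)
    (δP : Matrix F C ℝ) (hδP : δP = Aff * W + Afc)
    (δR : Matrix C F ℝ) (hδR : δR = Z * Aff + Acf)
    (Weff : Matrix F C ℝ) (hWeff : Weff = δF * W - ΔF * Afc)
    (EF : Matrix (F ⊕ C) (F ⊕ C) ℝ) (hEF : EF = 1 - fromBlocks ΔF 0 0 0 * A)
    (E : Matrix (F ⊕ C) (F ⊕ C) ℝ) (hE : E = EF * (1 - P * K⁻¹ * R * A))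
    (G : Matrix F F ℝ) (hG : G = δF + ΔF * δP * K⁻¹ * δR)
    (U : Matrix (F ⊕ C) F ℝ) (hU : U = fromRows (δF - Weff * K⁻¹ * δR) (-(K⁻¹ * δR)))
    (V : Matrix F (F ⊕ C) ℝ) (hV : V = fromCols 1 (-W)) :
    ∀ k : ℕ, 1 ≤ k → E ^ k = U * G ^ (k - 1) * V := by
  have hRA : R * A = fromCols δR (Z * Afc + Acc) := by
    rw [hR, hA, fromCols_mul_fromBlocks, Matrix.one_mul, Matrix.one_mul, hδR]
  have hK' : K = δR * W + (Z * Afc + Acc) := by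
    rw [hK, hRA, hP, fromCols_mul_fromRows, Matrix.mul_one]
  have hCoarse : 1 - P * K⁻¹ * R * A = fromRows (1 - W * K⁻¹ * δR) (-(K⁻¹ * δR)) * V := by
    rw [Matrix.mul_assoc _ R, hRA, hP, hV, hK']
    exact one_sub_fromRows_mul_inv_mul_fromCols W δR _ (hK' ▸ hKinv)
  have hSmooth : EF = fromBlocks δF (-(ΔF * Afc)) 0 1 := by
    rw [hEF, hA, one_sub_fromBlocks_mul_fromBlocks, hδF]
  have hEUV : E = U * V := by
    rw [hE, hCoarse, ← Matrix.mul_assoc, hSmooth, fromBlocks_mul_fromRows, hU, hWeff]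
    congr 2 <;>
      simp only [Matrix.mul_sub, Matrix.sub_mul, Matrix.mul_neg, Matrix.neg_mul, Matrix.one_mul,
        Matrix.mul_one, Matrix.zero_mul, Matrix.mul_assoc, neg_neg] <;> abel
  have hVU : V * U = G := by
    have hW : W - Weff = ΔF * δP := by
      rw [hWeff, hδF, hδP]
      simp only [Matrix.mul_add, Matrix.sub_mul, Matrix.one_mul, Matrix.mul_assoc]
      abel
    rw [hV, hU, fromCols_mul_fromRows, hG, Matrix.one_mul, Matrix.neg_mul, Matrix.mul_neg, neg_neg,
      ← hW]
    simp only [Matrix.sub_mul, Matrix.mul_assoc]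
    abel
  intro k hk
  obtain ⟨j, rfl⟩ := Nat.exists_eq_add_of_le' hk
  rw [hEUV, mul_pow_succ_eq_mul_mul_pow_mul, hVU, Nat.add_sub_cancel]
end

section
/- Let A = [[A_ff, A_fc],[A_cf, A_cc]] be invertible, P = [[W],[I]], R = [Z, I], assume K = R·A·P is invertible, let Δ_F be an invertible F×F matrix, and set δ_P = A_ff·W + A_fc. Let E = E_F·(I − P·K⁻¹·R·A) with E_F = I − [[Δ_F, 0],[0, 0]]·A, let 𝓡 = A·E·A⁻¹ be the residual-propagation matrix, and let G = (I − Δ_F·A_ff) + Δ_F·δ_P·K⁻¹·(Z·A_ff + A_cf). Then for every integer k ≥ 1, 𝓡^k = U · G^(k−1) · V, where U is the (F⊕C)×F block-column matrix with F-block Δ_F⁻¹ − A_ff and C-block −(Z·Δ_F⁻¹ + A_cf), and V is the F×(F⊕C) block-row matrix [Δ_F·(I − δ_P·K⁻¹·Z), −Δ_F·δ_P·K⁻¹]. -/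
/-!
Conjugating by `A` turns the two-grid propagator into
`𝓡 = (I − A·[[Δ_F, 0], [0, 0]])·(I − A·P·K⁻¹·R)`. The coarse-grid factor is annihilated by `R`
from the left, so it factors through `ker R = range [[I], [−Z]]`, and multiplying out shows
`𝓡 = U·V`. A direct block computation gives `V·U = G`, hence `𝓡^k = U·(V·U)^(k−1)·V`.
-/

open Matrix

namespace Matrix

variable {m n α : Type*} [Fintype m] [Fintype n] [DecidableEq m] [DecidableEq n]

theorem mul_pow_succ [Semiring α] (U : Matrix m n α) (V : Matrix n m α) (k : ℕ) :
    (U * V) ^ (k + 1) = U * (V * U) ^ k * V := by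
  induction k with
  | zero => simp
  | succ k ih => rw [pow_succ, ih, pow_succ]; simp only [Matrix.mul_assoc]

/-- `K − Z·δ` is the `C`-block of `A·P`, so that `R·(A·P) = K`. -/
theorem one_sub_fromRows_mul_nonsing_inv_mul_fromCols [CommRing α]
    (δ : Matrix n m α) (Z : Matrix m n α) (K : Matrix m m α) (hK : IsUnit K) :
    1 - fromRows δ (K - Z * δ) * K⁻¹ * fromCols Z 1
      = fromRows (1 : Matrix n n α) (-Z) * fromCols (1 - δ * K⁻¹ * Z) (-(δ * K⁻¹)) := by
  have hKK : K * K⁻¹ = 1 := mul_nonsing_inv K ((isUnit_iff_isUnit_det K).mp hK)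
  rw [fromRows_mul, fromRows_mul_fromCols, fromRows_mul_fromCols, ← fromBlocks_one,
    sub_eq_add_neg, fromBlocks_neg, fromBlocks_add]
  congr 1 <;> simp only [Matrix.sub_mul, Matrix.mul_sub, Matrix.neg_mul, Matrix.mul_neg,
    Matrix.one_mul, Matrix.mul_one, hKK, ← Matrix.mul_assoc] <;> abel

theorem one_sub_fromBlocks_mul_fromBlocks_mul_fromRows [CommRing α]
    (Aff : Matrix n n α) (Afc : Matrix n m α) (Acf : Matrix m n α) (Acc : Matrix m m α)
    (Δ : Matrix n n α) (hΔ : IsUnit Δ) (Z : Matrix m n α) :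
    (1 - fromBlocks Aff Afc Acf Acc * fromBlocks Δ 0 0 0) *
        fromRows (1 : Matrix n n α) (-Z)
      = fromRows (Δ⁻¹ - Aff) (-(Z * Δ⁻¹ + Acf)) * Δ := by
  have hΔΔ : Δ⁻¹ * Δ = 1 := nonsing_inv_mul Δ ((isUnit_iff_isUnit_det Δ).mp hΔ)
  rw [fromBlocks_multiply, ← fromBlocks_one, sub_eq_add_neg, fromBlocks_neg, fromBlocks_add,
    fromBlocks_mul_fromRows, fromRows_mul]
  congr 1 <;> simp only [Matrix.sub_mul, Matrix.add_mul, Matrix.neg_mul, Matrix.mul_neg,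
    Matrix.one_mul, Matrix.mul_one, Matrix.mul_zero, Matrix.zero_mul, hΔΔ, Matrix.mul_assoc] <;>
    abel

end Matrix

theorem mul_one_sub_mul_one_sub_mul {R : Type*} [Ring R] (a b c : R) :
    a * ((1 - b * a) * (1 - c * a)) = (1 - a * b) * (1 - a * c) * a := by
  noncomm_ring

/-- **Outer-product form of powers of the residual propagator.** With
`𝓡 = A·E·A⁻¹` and `G = (I − Δ_F·A_ff) + Δ_F·δ_P·K⁻¹·δ_R`, one has
`𝓡^k = U·G^(k−1)·V` for all `k ≥ 1`, where
`U = [[Δ_F⁻¹ − A_ff],[−(Z·Δ_F⁻¹ + A_cf)]]` and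
`V = [Δ_F·(I − δ_P·K⁻¹·Z), −Δ_F·δ_P·K⁻¹]`. -/
theorem residual_prop_powers_outer_product
    {F C : Type*} [Fintype F] [Fintype C] [DecidableEq F] [DecidableEq C]
    (Aff : Matrix F F ℝ) (Afc : Matrix F C ℝ) (Acf : Matrix C F ℝ) (Acc : Matrix C C ℝ)
    (W : Matrix F C ℝ) (Z : Matrix C F ℝ) (ΔF : Matrix F F ℝ) (hΔF : IsUnit ΔF)
    (A : Matrix (F ⊕ C) (F ⊕ C) ℝ) (hA : A = fromBlocks Aff Afc Acf Acc) (hAinv : IsUnit A)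
    (P : Matrix (F ⊕ C) C ℝ) (hP : P = fromRows W 1)
    (R : Matrix C (F ⊕ C) ℝ) (hR : R = fromCols Z 1)
    (K : Matrix C C ℝ) (hK : K = R * A * P) (hKinv : IsUnit K)
    (δP : Matrix F C ℝ) (hδP : δP = Aff * W + Afc)
    (δR : Matrix C F ℝ) (hδR : δR = Z * Aff + Acf)
    (EF : Matrix (F ⊕ C) (F ⊕ C) ℝ) (hEF : EF = 1 - fromBlocks ΔF 0 0 0 * A)
    (E : Matrix (F ⊕ C) (F ⊕ C) ℝ) (hE : E = EF * (1 - P * K⁻¹ * R * A))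
    (Res : Matrix (F ⊕ C) (F ⊕ C) ℝ) (hRes : Res = A * E * A⁻¹)
    (G : Matrix F F ℝ) (hG : G = (1 - ΔF * Aff) + ΔF * δP * K⁻¹ * δR)
    (U : Matrix (F ⊕ C) F ℝ) (hU : U = fromRows (ΔF⁻¹ - Aff) (-(Z * ΔF⁻¹ + Acf)))
    (V : Matrix F (F ⊕ C) ℝ)
    (hV : V = fromCols (ΔF * (1 - δP * K⁻¹ * Z)) (-(ΔF * δP * K⁻¹))) :
    ∀ k : ℕ, 1 ≤ k → Res ^ k = U * G ^ (k - 1) * V := by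
  have hAP_blocks : A * P = fromRows δP (Acf * W + Acc) := by
    rw [hA, hP, fromBlocks_mul_fromRows, hδP, Matrix.mul_one, Matrix.mul_one]
  have hAP : A * P = fromRows δP (K - Z * δP) := by
    rw [hK, Matrix.mul_assoc, hAP_blocks, hR, fromCols_mul_fromRows, Matrix.one_mul,
      add_sub_cancel_left]
  have hRes_conj : Res = (1 - A * fromBlocks ΔF 0 0 0) * (1 - A * P * K⁻¹ * R) := by
    rw [hRes, hE, hEF, mul_one_sub_mul_one_sub_mul, Matrix.mul_assoc _ A,
      mul_nonsing_inv A ((isUnit_iff_isUnit_det A).mp hAinv), Matrix.mul_one]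
    simp only [Matrix.mul_assoc]
  have hUV : Res = U * V := by
    rw [hRes_conj, hAP, hR, one_sub_fromRows_mul_nonsing_inv_mul_fromCols _ _ _ hKinv,
      ← Matrix.mul_assoc, hA, one_sub_fromBlocks_mul_fromBlocks_mul_fromRows _ _ _ _ _ hΔF,
      hU, hV, Matrix.mul_assoc, mul_fromCols, Matrix.mul_neg, Matrix.mul_assoc ΔF δP]
  have hVU : V * U = G := by
    rw [hV, hU, fromCols_mul_fromRows, hG, hδR]
    simp only [Matrix.mul_sub, Matrix.sub_mul, Matrix.mul_add, Matrix.mul_neg, Matrix.neg_mul,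
      Matrix.mul_one, ← Matrix.mul_assoc, mul_nonsing_inv ΔF ((isUnit_iff_isUnit_det ΔF).mp hΔF)]
    abel
  intro k hk
  obtain ⟨n, rfl⟩ := Nat.exists_eq_add_of_le' hk
  rw [hUV, Matrix.mul_pow_succ, hVU, Nat.add_sub_cancel]
end

section
/- Let A = [[A_ff, A_fc],[A_cf, A_cc]] with A_ff invertible, let P = [[W],[I]] and R = [Z, I], let K = R·A·P, and let K_A = A_cc − A_cf·A_ff⁻¹·A_fc be the Schur complement. With δ_P = A_ff·W + A_fc and δ_R = Z·A_ff + A_cf, one has K − K_A = δ_R·A_ff⁻¹·δ_P. -/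
open Matrix

/-!
Expanding, `K = Z A_ff W + Z A_fc + A_cf W + A_cc`. In `δ_R A_ff⁻¹ δ_P` the inverse cancels
against a factor `A_ff` in every term except `A_cf A_ff⁻¹ A_fc`, so
`δ_R A_ff⁻¹ δ_P = Z A_ff W + Z A_fc + A_cf W + A_cf A_ff⁻¹ A_fc`, and the two sides differ
by exactly the Schur complement.
-/

section

variable {f c α : Type*}

theorem fromCols_one_mul_fromBlocks_mul_fromRows_one [Fintype f] [Fintype c] [DecidableEq c]
    [Semiring α] (Aff : Matrix f f α) (Afc : Matrix f c α) (Acf : Matrix c f α)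
    (Acc : Matrix c c α) (W : Matrix f c α) (Z : Matrix c f α) :
    fromCols Z (1 : Matrix c c α) * fromBlocks Aff Afc Acf Acc * fromRows W (1 : Matrix c c α)
      = Z * Aff * W + Z * Afc + Acf * W + Acc := by
  rw [Matrix.mul_assoc, fromBlocks_mul_fromRows, fromCols_mul_fromRows]
  simp only [Matrix.one_mul, Matrix.mul_one, Matrix.mul_add, Matrix.mul_assoc]
  abel

theorem add_mul_nonsing_inv_mul_add [Fintype f] [DecidableEq f] [CommRing α]
    (Aff : Matrix f f α) (Afc : Matrix f c α) (Acf : Matrix c f α) (W : Matrix f c α)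
    (Z : Matrix c f α) (hAff : IsUnit Aff.det) :
    (Z * Aff + Acf) * Aff⁻¹ * (Aff * W + Afc)
      = Z * Aff * W + Z * Afc + Acf * W + Acf * Aff⁻¹ * Afc := by
  have hZ : Z * Aff * Aff⁻¹ = Z := mul_nonsing_inv_cancel_right Aff Z hAff
  have hW : Aff⁻¹ * (Aff * W) = W := nonsing_inv_mul_cancel_left Aff W hAff
  have hAcf : Acf * Aff⁻¹ * (Aff * W) = Acf * W := by rw [Matrix.mul_assoc, hW]
  rw [Matrix.add_mul, hZ, Matrix.mul_add, Matrix.add_mul, Matrix.add_mul, hAcf,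
    ← Matrix.mul_assoc Z Aff W]
  abel

end

/-- The difference between the coarse-grid operator `K = R·A·P` and the Schur complement
`K_A = A_cc − A_cf·A_ff⁻¹·A_fc` is `K − K_A = δ_R·A_ff⁻¹·δ_P`. -/
theorem coarse_operator_sub_schur_complement
    {F C : Type*} [Fintype F] [Fintype C] [DecidableEq F] [DecidableEq C]
    (Aff : Matrix F F ℝ) (Afc : Matrix F C ℝ) (Acf : Matrix C F ℝ) (Acc : Matrix C C ℝ)
    (hAff : IsUnit Aff)
    (W : Matrix F C ℝ) (Z : Matrix C F ℝ)
    (A : Matrix (F ⊕ C) (F ⊕ C) ℝ) (hA : A = fromBlocks Aff Afc Acf Acc)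
    (P : Matrix (F ⊕ C) C ℝ) (hP : P = fromRows W 1)
    (R : Matrix C (F ⊕ C) ℝ) (hR : R = fromCols Z 1)
    (K : Matrix C C ℝ) (hK : K = R * A * P)
    (KA : Matrix C C ℝ) (hKA : KA = Acc - Acf * Aff⁻¹ * Afc)
    (δP : Matrix F C ℝ) (hδP : δP = Aff * W + Afc)
    (δR : Matrix C F ℝ) (hδR : δR = Z * Aff + Acf) :
    K - KA = δR * Aff⁻¹ * δP := by
  subst hA hP hR hK hKA hδP hδR
  rw [fromCols_one_mul_fromBlocks_mul_fromRows_one,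
    add_mul_nonsing_inv_mul_add _ _ _ _ _ ((isUnit_iff_isUnit_det Aff).mp hAff)]
  abel
end

section
/- Let A be a nonzero square real matrix on F ⊕ C and let P = [[W],[I]]. Suppose P satisfies the weak approximation property with respect to AᵀA with constant C_P, i.e., for every vector v on F ⊕ C there exists a coarse vector w_c with ‖v − P·w_c‖² ≤ (C_P/‖AᵀA‖)·‖A·v‖². Then for every vector v = (v_f, v_c) on F ⊕ C, ‖v_f − W·v_c‖ ≤ C_W·‖A·v‖, where C_W = sqrt(C_P·(1 + ‖W‖²)/‖AᵀA‖). -/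
open Matrix
open scoped Matrix.Norms.L2Operator

/-- The Euclidean (ℓ²) norm of a finitely-supported real vector. -/
noncomputable def euclNorm {ι : Type*} [Fintype ι] (v : ι → ℝ) : ℝ :=
  ‖(WithLp.equiv 2 (ι → ℝ)).symm v‖

/-!
The map `v ↦ v_f − W v_c` annihilates the range of `P = [[W],[I]]`, so for the coarse vector
`w_c` supplied by the weak approximation property it takes the same value on `v` and on the
error `u = v − P w_c`. On `u` it is bounded by `‖u_f‖ + ‖W‖ ‖u_c‖ ≤ √(1 + ‖W‖²) ‖u‖`
(Cauchy–Schwarz in `ℝ²`), and `‖u‖ ≤ √(C_P / ‖AᵀA‖) ‖A v‖` is the approximation property itself.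
-/

section euclNorm

variable {ι κ : Type*} [Fintype ι] [Fintype κ]

lemma euclNorm_nonneg (v : ι → ℝ) : 0 ≤ euclNorm v :=
  norm_nonneg _

lemma euclNorm_sq (v : ι → ℝ) : euclNorm v ^ 2 = ∑ i, v i ^ 2 := by
  rw [euclNorm, EuclideanSpace.norm_eq, Real.sq_sqrt (by positivity)]
  simp [sq_abs]

lemma euclNorm_sub_le (v w : ι → ℝ) : euclNorm (v - w) ≤ euclNorm v + euclNorm w :=
  norm_sub_le ((WithLp.equiv 2 (ι → ℝ)).symm v) ((WithLp.equiv 2 (ι → ℝ)).symm w)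

lemma euclNorm_mulVec_le [DecidableEq ι] [DecidableEq κ] (M : Matrix ι κ ℝ) (x : κ → ℝ) :
    euclNorm (M *ᵥ x) ≤ ‖M‖ * euclNorm x :=
  M.l2_opNorm_mulVec ((WithLp.equiv 2 (κ → ℝ)).symm x)

lemma euclNorm_sum_sq (u : ι ⊕ κ → ℝ) :
    euclNorm u ^ 2 = euclNorm (u ∘ Sum.inl) ^ 2 + euclNorm (u ∘ Sum.inr) ^ 2 := by
  simp only [euclNorm_sq, Fintype.sum_sum_type, Function.comp_apply]

end euclNorm

lemma add_mul_le_sqrt_one_add_sq_mul_sqrt (a b w : ℝ) :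
    a + w * b ≤ √(1 + w ^ 2) * √(a ^ 2 + b ^ 2) := by
  rw [← Real.sqrt_mul (by positivity)]
  exact (le_abs_self _).trans <| Real.abs_le_sqrt <| by nlinarith [sq_nonneg (w * a - b)]

-- No sign condition on `c`: for `c < 0` the hypothesis forces `x = 0`, and `√c = 0`.
lemma le_sqrt_mul_of_sq_le_mul_sq {x c q : ℝ} (hx : 0 ≤ x) (hq : 0 ≤ q) (h : x ^ 2 ≤ c * q ^ 2) :
    x ≤ √c * q := by
  calc x = √(x ^ 2) := (Real.sqrt_sq hx).symm
    _ ≤ √(c * q ^ 2) := Real.sqrt_le_sqrt h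
    _ = √c * q := by rw [Real.sqrt_mul' c (sq_nonneg q), Real.sqrt_sq hq]

section fineDefect

variable {F C : Type*} [Fintype C]

def fineDefect (W : Matrix F C ℝ) (v : F ⊕ C → ℝ) : F → ℝ :=
  v ∘ Sum.inl - W *ᵥ (v ∘ Sum.inr)

lemma fineDefect_sub_fromRows_mulVec [DecidableEq C] (W : Matrix F C ℝ) (v : F ⊕ C → ℝ) (w : C → ℝ) :
    fineDefect W (v - fromRows W 1 *ᵥ w) = fineDefect W v := by
  have hf : (v - fromRows W 1 *ᵥ w) ∘ Sum.inl = v ∘ Sum.inl - W *ᵥ w := by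
    ext i; simp [fromRows_mulVec]
  have hc : (v - fromRows W 1 *ᵥ w) ∘ Sum.inr = v ∘ Sum.inr - w := by
    ext j; simp [fromRows_mulVec]
  simp only [fineDefect, hf, hc, mulVec_sub]
  abel

lemma euclNorm_fineDefect_le [Fintype F] [DecidableEq F] [DecidableEq C] (W : Matrix F C ℝ)
    (u : F ⊕ C → ℝ) : euclNorm (fineDefect W u) ≤ √(1 + ‖W‖ ^ 2) * euclNorm u := by
  calc euclNorm (fineDefect W u)
      ≤ euclNorm (u ∘ Sum.inl) + ‖W‖ * euclNorm (u ∘ Sum.inr) :=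
        (euclNorm_sub_le _ _).trans (by gcongr; exact euclNorm_mulVec_le W _)
    _ ≤ √(1 + ‖W‖ ^ 2) * √(euclNorm (u ∘ Sum.inl) ^ 2 + euclNorm (u ∘ Sum.inr) ^ 2) :=
        add_mul_le_sqrt_one_add_sq_mul_sqrt _ _ _
    _ = √(1 + ‖W‖ ^ 2) * euclNorm u := by
        rw [← euclNorm_sum_sq, Real.sqrt_sq (euclNorm_nonneg u)]

end fineDefect

theorem wap_implies_F_point_interpolation_bound_general
    {F C : Type*} [Fintype F] [Fintype C] [DecidableEq F] [DecidableEq C]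
    (A : Matrix (F ⊕ C) (F ⊕ C) ℝ)
    (W : Matrix F C ℝ)
    (P : Matrix (F ⊕ C) C ℝ) (hP : P = fromRows W 1)
    (CP : ℝ)
    (hWAP : ∀ v : (F ⊕ C) → ℝ, ∃ wc : C → ℝ,
      euclNorm (v - P *ᵥ wc) ^ 2 ≤ (CP / ‖Aᵀ * A‖) * euclNorm (A *ᵥ v) ^ 2)
    (CW : ℝ) (hCW : CW = Real.sqrt (CP * (1 + ‖W‖ ^ 2) / ‖Aᵀ * A‖)) :
    ∀ v : (F ⊕ C) → ℝ,
      euclNorm ((fun i => v (Sum.inl i)) - W *ᵥ (fun j => v (Sum.inr j))) ≤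
        CW * euclNorm (A *ᵥ v) := by
  intro v
  obtain ⟨wc, hwc⟩ := hWAP v
  subst hP
  have hu : euclNorm (v - fromRows W 1 *ᵥ wc) ≤ √(CP / ‖Aᵀ * A‖) * euclNorm (A *ᵥ v) :=
    le_sqrt_mul_of_sq_le_mul_sq (euclNorm_nonneg _) (euclNorm_nonneg _) hwc
  have hCW' : CW = √(1 + ‖W‖ ^ 2) * √(CP / ‖Aᵀ * A‖) := by
    rw [hCW, mul_comm CP, mul_div_assoc, Real.sqrt_mul (by positivity)]
  calc euclNorm (fineDefect W v)
      = euclNorm (fineDefect W (v - fromRows W 1 *ᵥ wc)) := by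
        rw [fineDefect_sub_fromRows_mulVec]
    _ ≤ √(1 + ‖W‖ ^ 2) * euclNorm (v - fromRows W 1 *ᵥ wc) := euclNorm_fineDefect_le W _
    _ ≤ CW * euclNorm (A *ᵥ v) := by
        rw [hCW', mul_assoc]
        exact mul_le_mul_of_nonneg_left hu (Real.sqrt_nonneg _)

/-- If `P = [[W],[I]]` satisfies the weak approximation property with respect to `AᵀA`
with constant `C_P`, then `‖v_f − W·v_c‖ ≤ C_W·‖A·v‖` for every `v = (v_f, v_c)`, where
`C_W = sqrt(C_P·(1 + ‖W‖²)/‖AᵀA‖)`. -/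
theorem wap_implies_F_point_interpolation_bound
    {F C : Type*} [Fintype F] [Fintype C] [DecidableEq F] [DecidableEq C]
    (A : Matrix (F ⊕ C) (F ⊕ C) ℝ) (hA0 : A ≠ 0)
    (W : Matrix F C ℝ)
    (P : Matrix (F ⊕ C) C ℝ) (hP : P = fromRows W 1)
    (CP : ℝ)
    (hWAP : ∀ v : (F ⊕ C) → ℝ, ∃ wc : C → ℝ,
      euclNorm (v - P *ᵥ wc) ^ 2 ≤ (CP / ‖Aᵀ * A‖) * euclNorm (A *ᵥ v) ^ 2)
    (CW : ℝ) (hCW : CW = Real.sqrt (CP * (1 + ‖W‖ ^ 2) / ‖Aᵀ * A‖)) :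
    ∀ v : (F ⊕ C) → ℝ,
      euclNorm ((fun i => v (Sum.inl i)) - W *ᵥ (fun j => v (Sum.inr j))) ≤
        CW * euclNorm (A *ᵥ v) :=
  wap_implies_F_point_interpolation_bound_general A W P hP CP hWAP CW hCW
end

section
/- Let A = [[A_ff, A_fc],[A_cf, A_cc]], let Δ_F be an invertible F×F matrix, set Z = −A_cf·Δ_F, let P = [[W],[I]] and R = [Z, I], and assume K = R·A·P is invertible. Let E = E_F·(I − P·K⁻¹·R·A) with E_F = I − [[Δ_F, 0],[0, 0]]·A, and for any C×C matrix Δ_C let E_C = I − [[0, 0],[0, Δ_C]]·A be the error propagation of C-point relaxation. Then E_C·E = E; that is, following the two-grid cycle by C-point relaxation does not change the error-propagation matrix. -/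
/-!
Let `S = [0, I]` select the C-rows. The choice `Z = −A_cf·Δ_F` makes the C-rows of `A·E_F` equal
to `R·A`, so `S·A·E = R·A·(I − P·K⁻¹·R·A) = R·A − K·K⁻¹·R·A = 0`: after the cycle the residual
vanishes at the C-points. C-point relaxation `E_C = I − [[0],[Δ_C]]·S·A` acts only through that
residual, hence leaves `E` unchanged.
-/

open Matrix

section BlockMatrix

variable {F C α : Type*} [Fintype C] [DecidableEq C] [Ring α]

/- The ascription `(1 : Matrix C C α)` is needed: with the shape of `1` still unknown when `*` is
elaborated, instance search picks `CStarMatrix`'s multiplication, which the block lemmas do not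
match. -/
theorem fromCols_zero_one_mul_fromBlocks [Fintype F] (Aff : Matrix F F α) (Afc : Matrix F C α)
    (Acf : Matrix C F α) (Acc : Matrix C C α) :
    fromCols (0 : Matrix C F α) (1 : Matrix C C α) * fromBlocks Aff Afc Acf Acc =
      fromCols Acf Acc := by
  rw [fromCols_mul_fromBlocks]
  simp

theorem fromBlocks_zero_zero_zero_eq_fromRows_mul_fromCols (ΔC : Matrix C C α) :
    fromBlocks (0 : Matrix F F α) 0 0 ΔC =
      fromRows (0 : Matrix F C α) ΔC * fromCols (0 : Matrix C F α) (1 : Matrix C C α) := by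
  rw [fromRows_mul_fromCols]
  simp

theorem fromCols_zero_one_mul_mul_sub_fromBlocks_mul [Fintype F] [DecidableEq F]
    (Aff : Matrix F F α) (Afc : Matrix F C α) (Acf : Matrix C F α) (Acc : Matrix C C α)
    (ΔF : Matrix F F α) :
    fromCols (0 : Matrix C F α) (1 : Matrix C C α) * fromBlocks Aff Afc Acf Acc *
        (1 - fromBlocks ΔF 0 0 0 * fromBlocks Aff Afc Acf Acc) =
      fromCols (-(Acf * ΔF)) (1 : Matrix C C α) * fromBlocks Aff Afc Acf Acc := by
  rw [fromCols_zero_one_mul_fromBlocks, Matrix.mul_sub, Matrix.mul_one, ← Matrix.mul_assoc,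
    fromCols_mul_fromBlocks, fromCols_mul_fromBlocks, fromCols_mul_fromBlocks]
  ext i (j | j) <;> simp [Matrix.mul_assoc, sub_eq_add_neg, add_comm]

end BlockMatrix

theorem Matrix.mul_one_sub_mul_nonsing_inv_mul_eq_zero {m n β : Type*} [Fintype m] [Fintype n]
    [DecidableEq m] [DecidableEq n] [CommRing β] (M : Matrix m n β) (P : Matrix n m β)
    (h : IsUnit (M * P)) : M * (1 - P * (M * P)⁻¹ * M) = 0 := by
  rw [Matrix.mul_sub, Matrix.mul_one, ← Matrix.mul_assoc, ← Matrix.mul_assoc,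
    mul_nonsing_inv _ ((isUnit_iff_isUnit_det _).mp h), Matrix.one_mul, sub_self]

theorem C_point_relaxation_no_improvement_general
    {F C : Type*} [Fintype F] [Fintype C] [DecidableEq F] [DecidableEq C]
    (Aff : Matrix F F ℝ) (Afc : Matrix F C ℝ) (Acf : Matrix C F ℝ) (Acc : Matrix C C ℝ)
    (ΔF : Matrix F F ℝ)
    (Z : Matrix C F ℝ) (hZ : Z = -(Acf * ΔF))
    (A : Matrix (F ⊕ C) (F ⊕ C) ℝ) (hA : A = fromBlocks Aff Afc Acf Acc)
    (P : Matrix (F ⊕ C) C ℝ)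
    (R : Matrix C (F ⊕ C) ℝ) (hR : R = fromCols Z 1)
    (K : Matrix C C ℝ) (hK : K = R * A * P) (hKinv : IsUnit K)
    (EF : Matrix (F ⊕ C) (F ⊕ C) ℝ) (hEF : EF = 1 - fromBlocks ΔF 0 0 0 * A)
    (E : Matrix (F ⊕ C) (F ⊕ C) ℝ) (hE : E = EF * (1 - P * K⁻¹ * R * A))
    (ΔC : Matrix C C ℝ)
    (EC : Matrix (F ⊕ C) (F ⊕ C) ℝ) (hEC : EC = 1 - fromBlocks 0 0 0 ΔC * A) :
    EC * E = E := by
  set S : Matrix C (F ⊕ C) ℝ := fromCols 0 1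
  have hSAEF : S * A * EF = R * A := by
    rw [hEF, hR, hZ, hA, fromCols_zero_one_mul_mul_sub_fromBlocks_mul]
  have hSAE : S * A * E = 0 := by
    rw [hE, ← Matrix.mul_assoc, hSAEF, Matrix.mul_assoc (P * K⁻¹) R A, hK]
    exact mul_one_sub_mul_nonsing_inv_mul_eq_zero (R * A) P (hK ▸ hKinv)
  rw [hEC, sub_mul, Matrix.one_mul, fromBlocks_zero_zero_zero_eq_fromRows_mul_fromCols,
    Matrix.mul_assoc, Matrix.mul_assoc, ← Matrix.mul_assoc S, hSAE, Matrix.mul_zero, sub_zero]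

/-- **Remark 3.6 (C-point relaxation).** If `Z = −A_cf·Δ_F`, then following the two-grid
cycle `E = E_F·(I − P·K⁻¹·R·A)` by C-point relaxation `E_C = I − [[0,0],[0,Δ_C]]·A` does not
change the error-propagation matrix: `E_C·E = E`. -/
theorem C_point_relaxation_no_improvement
    {F C : Type*} [Fintype F] [Fintype C] [DecidableEq F] [DecidableEq C]
    (Aff : Matrix F F ℝ) (Afc : Matrix F C ℝ) (Acf : Matrix C F ℝ) (Acc : Matrix C C ℝ)
    (W : Matrix F C ℝ) (ΔF : Matrix F F ℝ) (hΔF : IsUnit ΔF)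
    (Z : Matrix C F ℝ) (hZ : Z = -(Acf * ΔF))
    (A : Matrix (F ⊕ C) (F ⊕ C) ℝ) (hA : A = fromBlocks Aff Afc Acf Acc)
    (P : Matrix (F ⊕ C) C ℝ) (hP : P = fromRows W 1)
    (R : Matrix C (F ⊕ C) ℝ) (hR : R = fromCols Z 1)
    (K : Matrix C C ℝ) (hK : K = R * A * P) (hKinv : IsUnit K)
    (EF : Matrix (F ⊕ C) (F ⊕ C) ℝ) (hEF : EF = 1 - fromBlocks ΔF 0 0 0 * A)
    (E : Matrix (F ⊕ C) (F ⊕ C) ℝ) (hE : E = EF * (1 - P * K⁻¹ * R * A))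
    (ΔC : Matrix C C ℝ)
    (EC : Matrix (F ⊕ C) (F ⊕ C) ℝ) (hEC : EC = 1 - fromBlocks 0 0 0 ΔC * A) :
    EC * E = E :=
  C_point_relaxation_no_improvement_general Aff Afc Acf Acc ΔF Z hZ A hA P R hR K hK hKinv EF hEF E
    hE ΔC EC hEC
end

section
/- Let A = [[A_ff, A_fc],[A_cf, A_cc]], let Δ_F be an invertible F×F matrix, set Z = −A_cf·Δ_F, δ_F = I − Δ_F·A_ff, δ_P = A_ff·W + A_fc, Ŵ = δ_F·W − Δ_F·A_fc, let P = [[W],[I]] and R = [Z, I], K = R·A·P, and let K̂ be any invertible C×C matrix with δK = K̂ − K. Define the multilevel error-propagation matrix Ê = I − M̂⁻¹·A, where M̂⁻¹ denotes the product [[I, Ŵ],[0, I]]·[[Δ_F, 0],[0, K̂⁻¹]]·[[I, 0],[Z, I]]. Then for every integer k ≥ 1, Ê^k = U · Ĝ^(k−1) · V, where U = [[I − Ŵ·K̂⁻¹·A_cf, Ŵ·K̂⁻¹],[−K̂⁻¹·A_cf, K̂⁻¹]], V = [[δ_F, −δ_F·W],[0, δK]], and Ĝ = [[δ_F + δ_F·Δ_F·δ_P·K̂⁻¹·A_cf,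 −δ_F·Δ_F·δ_P·K̂⁻¹],[−δK·K̂⁻¹·A_cf, δK·K̂⁻¹]]. -/
/-!
Writing `U` and `V` for the stated block matrices, the theorem reduces to the two factorizations
`Ê = U * V` and `Ĝ = V * U`, after which `(U * V) ^ (n + 1) = U * (V * U) ^ n * V` holds in any
monoid. The preconditioner factors as `M̂⁻¹ = U * diag(Δ_F, I)`, and `U` has the right inverse
`[[I, -Ŵ], [A_cf, K̂ - A_cf * Ŵ]]`, which equals `V + diag(Δ_F, I) * A` because the Galerkin
operator is `K = A_cf * Ŵ + A_cc`; hence `Ê = U * (V + diag(Δ_F, I) * A) - U * diag(Δ_F, I) * A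
= U * V`. The identity `Ĝ = V * U` only needs `Ŵ - W = -Δ_F * δ_P`.
-/

open Matrix

section BlockIdentities

variable {F C R : Type*} [Fintype F] [Fintype C] [DecidableEq F] [Ring R]
  (Aff : Matrix F F R) (Afc : Matrix F C R) (Acf : Matrix C F R) (Acc : Matrix C C R)
  (W : Matrix F C R) (ΔF : Matrix F F R) (Weff : Matrix F C R) (Kinv : Matrix C C R)

theorem galerkin_coarse_operator_eq [DecidableEq C] (hWeff : Weff = (1 - ΔF * Aff) * W - ΔF * Afc) :
    (fromCols (-(Acf * ΔF)) 1 : Matrix C (F ⊕ C) R) * fromBlocks Aff Afc Acf Acc *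
      (fromRows W 1 : Matrix (F ⊕ C) C R) = Acf * Weff + Acc := by
  simp only [fromCols_mul_fromBlocks, fromCols_mul_fromRows, hWeff, Matrix.add_mul,
    Matrix.mul_sub, Matrix.sub_mul, Matrix.neg_mul, Matrix.mul_assoc, Matrix.mul_one,
    Matrix.one_mul]
  abel

theorem preconditioner_eq_mul_fromBlocks_diagonal [DecidableEq C] :
    fromBlocks 1 Weff 0 1 * fromBlocks ΔF 0 0 Kinv * fromBlocks 1 0 (-(Acf * ΔF)) 1 =
      fromBlocks (1 - Weff * Kinv * Acf) (Weff * Kinv) (-(Kinv * Acf)) Kinv *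
        fromBlocks ΔF 0 0 1 := by
  simp only [fromBlocks_multiply, Matrix.add_mul, Matrix.neg_mul, Matrix.mul_neg,
    Matrix.mul_assoc, Matrix.mul_one, Matrix.one_mul, Matrix.mul_zero, Matrix.zero_mul, add_zero,
    zero_add, sub_eq_add_neg]

theorem fromBlocks_mul_fromBlocks_eq_one [DecidableEq C] {Khat : Matrix C C R} (hK : Kinv * Khat = 1) :
    fromBlocks (1 - Weff * Kinv * Acf) (Weff * Kinv) (-(Kinv * Acf)) Kinv *
      fromBlocks 1 (-Weff) Acf (Khat - Acf * Weff) = 1 := by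
  rw [← fromBlocks_one]
  simp only [fromBlocks_multiply, Matrix.mul_sub, Matrix.sub_mul, Matrix.neg_mul,
    Matrix.mul_neg, Matrix.mul_assoc, Matrix.mul_one, Matrix.one_mul, hK]
  congr 1 <;> abel

theorem fromBlocks_mul_fromBlocks_eq_iteration (δF : Matrix F F R) (δP : Matrix F C R)
    (δK : Matrix C C R) (hδF : δF = 1 - ΔF * Aff) (hδP : δP = Aff * W + Afc)
    (hWeff : Weff = δF * W - ΔF * Afc) :
    fromBlocks δF (-(δF * W)) 0 δK *
        fromBlocks (1 - Weff * Kinv * Acf) (Weff * Kinv) (-(Kinv * Acf)) Kinv =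
      fromBlocks (δF + δF * ΔF * δP * Kinv * Acf) (-(δF * ΔF * δP * Kinv))
        (-(δK * Kinv * Acf)) (δK * Kinv) := by
  have hshift : Weff = W - ΔF * δP := by
    rw [hWeff, hδF, hδP, Matrix.sub_mul, Matrix.mul_add, Matrix.one_mul, Matrix.mul_assoc]
    abel
  subst hshift
  simp only [fromBlocks_multiply, Matrix.mul_sub, Matrix.sub_mul, Matrix.neg_mul,
    Matrix.mul_neg, Matrix.mul_assoc, Matrix.mul_one, Matrix.zero_mul]
  congr 1 <;> abel

end BlockIdentities

theorem multilevel_error_prop_powers_general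
    {F C : Type*} [Fintype F] [Fintype C] [DecidableEq F] [DecidableEq C]
    (Aff : Matrix F F ℝ) (Afc : Matrix F C ℝ) (Acf : Matrix C F ℝ) (Acc : Matrix C C ℝ)
    (W : Matrix F C ℝ) (ΔF : Matrix F F ℝ)
    (Z : Matrix C F ℝ) (hZ : Z = -(Acf * ΔF))
    (δF : Matrix F F ℝ) (hδF : δF = 1 - ΔF * Aff)
    (δP : Matrix F C ℝ) (hδP : δP = Aff * W + Afc)
    (Weff : Matrix F C ℝ) (hWeff : Weff = δF * W - ΔF * Afc)
    (A : Matrix (F ⊕ C) (F ⊕ C) ℝ) (hA : A = fromBlocks Aff Afc Acf Acc)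
    (P : Matrix (F ⊕ C) C ℝ) (hP : P = fromRows W 1)
    (R : Matrix C (F ⊕ C) ℝ) (hR : R = fromCols Z 1)
    (K : Matrix C C ℝ) (hK : K = R * A * P)
    (Khat : Matrix C C ℝ) (hKhat : IsUnit Khat)
    (δK : Matrix C C ℝ) (hδK : δK = Khat - K)
    (Minvhat : Matrix (F ⊕ C) (F ⊕ C) ℝ)
    (hMinvhat :
      Minvhat = fromBlocks 1 Weff 0 1 * fromBlocks ΔF 0 0 Khat⁻¹ * fromBlocks 1 0 Z 1)
    (Ehat : Matrix (F ⊕ C) (F ⊕ C) ℝ) (hEhat : Ehat = 1 - Minvhat * A)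
    (U : Matrix (F ⊕ C) (F ⊕ C) ℝ)
    (hU : U = fromBlocks (1 - Weff * Khat⁻¹ * Acf) (Weff * Khat⁻¹)
      (-(Khat⁻¹ * Acf)) Khat⁻¹)
    (V : Matrix (F ⊕ C) (F ⊕ C) ℝ)
    (hV : V = fromBlocks δF (-(δF * W)) 0 δK)
    (Ghat : Matrix (F ⊕ C) (F ⊕ C) ℝ)
    (hGhat : Ghat = fromBlocks (δF + δF * ΔF * δP * Khat⁻¹ * Acf)
      (-(δF * ΔF * δP * Khat⁻¹)) (-(δK * Khat⁻¹ * Acf)) (δK * Khat⁻¹)) :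
    ∀ k : ℕ, 1 ≤ k → Ehat ^ k = U * Ghat ^ (k - 1) * V := by
  set D : Matrix (F ⊕ C) (F ⊕ C) ℝ := fromBlocks ΔF 0 0 1
  have hKinv : Khat⁻¹ * Khat = 1 := nonsing_inv_mul _ ((isUnit_iff_isUnit_det _).mp hKhat)
  have hVDA : V + D * A = fromBlocks 1 (-Weff) Acf (Khat - Acf * Weff) := by
    have hcoarse : K = Acf * Weff + Acc := by
      rw [hK, hR, hA, hP, hZ]
      exact galerkin_coarse_operator_eq Aff Afc Acf Acc W ΔF Weff (hδF ▸ hWeff)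
    rw [hV, hA, fromBlocks_multiply, fromBlocks_add, hδK, hcoarse, hWeff, hδF]
    simp only [Matrix.one_mul, Matrix.zero_mul, add_zero, zero_add]
    congr 1 <;> abel
  have hUV : Ehat = U * V := by
    have hUinv : U * (V + D * A) = 1 := by
      rw [hVDA, hU]
      exact fromBlocks_mul_fromBlocks_eq_one Acf Weff Khat⁻¹ hKinv
    rw [hEhat, hMinvhat, hZ, preconditioner_eq_mul_fromBlocks_diagonal, ← hU, ← hUinv,
      Matrix.mul_add, Matrix.mul_assoc, add_sub_cancel_right]
  have hVU : Ghat = V * U := by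
    rw [hGhat, hV, hU]
    exact (fromBlocks_mul_fromBlocks_eq_iteration Aff Afc Acf W ΔF Weff Khat⁻¹ δF δP δK
      hδF hδP hWeff).symm
  intro k hk
  obtain ⟨n, rfl⟩ : ∃ n, k = n + 1 := ⟨k - 1, by omega⟩
  rw [hUV, hVU, Nat.add_sub_cancel, pow_succ, ← Matrix.mul_assoc, mul_pow_mul,
    Matrix.mul_assoc]

/-- **Multilevel outer-product form.** With inexact coarse solve `K̂⁻¹` and `Z = −A_cf·Δ_F`,
the multilevel error propagator `Ê = I − M̂⁻¹·A` satisfies `Ê^k = U·Ĝ^(k−1)·V` for all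
`k ≥ 1`, with `U`, `V`, and `Ĝ` the stated 2×2 block matrices. -/
theorem multilevel_error_prop_powers
    {F C : Type*} [Fintype F] [Fintype C] [DecidableEq F] [DecidableEq C]
    (Aff : Matrix F F ℝ) (Afc : Matrix F C ℝ) (Acf : Matrix C F ℝ) (Acc : Matrix C C ℝ)
    (W : Matrix F C ℝ) (ΔF : Matrix F F ℝ) (hΔF : IsUnit ΔF)
    (Z : Matrix C F ℝ) (hZ : Z = -(Acf * ΔF))
    (δF : Matrix F F ℝ) (hδF : δF = 1 - ΔF * Aff)
    (δP : Matrix F C ℝ) (hδP : δP = Aff * W + Afc)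
    (Weff : Matrix F C ℝ) (hWeff : Weff = δF * W - ΔF * Afc)
    (A : Matrix (F ⊕ C) (F ⊕ C) ℝ) (hA : A = fromBlocks Aff Afc Acf Acc)
    (P : Matrix (F ⊕ C) C ℝ) (hP : P = fromRows W 1)
    (R : Matrix C (F ⊕ C) ℝ) (hR : R = fromCols Z 1)
    (K : Matrix C C ℝ) (hK : K = R * A * P)
    (Khat : Matrix C C ℝ) (hKhat : IsUnit Khat)
    (δK : Matrix C C ℝ) (hδK : δK = Khat - K)
    (Minvhat : Matrix (F ⊕ C) (F ⊕ C) ℝ)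
    (hMinvhat :
      Minvhat = fromBlocks 1 Weff 0 1 * fromBlocks ΔF 0 0 Khat⁻¹ * fromBlocks 1 0 Z 1)
    (Ehat : Matrix (F ⊕ C) (F ⊕ C) ℝ) (hEhat : Ehat = 1 - Minvhat * A)
    (U : Matrix (F ⊕ C) (F ⊕ C) ℝ)
    (hU : U = fromBlocks (1 - Weff * Khat⁻¹ * Acf) (Weff * Khat⁻¹)
      (-(Khat⁻¹ * Acf)) Khat⁻¹)
    (V : Matrix (F ⊕ C) (F ⊕ C) ℝ)
    (hV : V = fromBlocks δF (-(δF * W)) 0 δK)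
    (Ghat : Matrix (F ⊕ C) (F ⊕ C) ℝ)
    (hGhat : Ghat = fromBlocks (δF + δF * ΔF * δP * Khat⁻¹ * Acf)
      (-(δF * ΔF * δP * Khat⁻¹)) (-(δK * Khat⁻¹ * Acf)) (δK * Khat⁻¹)) :
    ∀ k : ℕ, 1 ≤ k → Ehat ^ k = U * Ghat ^ (k - 1) * V :=
  multilevel_error_prop_powers_general Aff Afc Acf Acc W ΔF Z hZ δF hδF δP hδP Weff hWeff A hA P hP
    R hR K hK Khat hKhat δK hδK Minvhat hMinvhat Ehat hEhat U hU V hV Ghat hGhat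
end

section
/- Let A be an n×n real matrix that is lower triangular with all diagonal entries equal to 1, and fix a partition of the indices {1,…,n} into F-points and C-points. Let A_ff, A_fc, A_cf, A_cc be the corresponding submatrices of A, let L_ff = I − A_ff (which is strictly lower triangular in the order inherited from {1,…,n}), and for nonnegative integers k_P, k_R let Δ_P = Σ_{i=0}^{k_P} L_ff^i and Δ_R = Σ_{i=0}^{k_R} L_ff^i be truncated Neumann approximations to A_ff⁻¹. Define W = −Δ_P·A_fc, Z = −A_cf·Δ_R, the interpolation P (F-rows W, C-rows identity), the restriction R (F-columns Z, C-columns identity), and K = R·A·P, all assembled on the full index set via the partition. Then K is lower triangular with unit diagonal (hence invertible), and the two-grid error-propagation matrix E = E_F·(I − P·K⁻¹·R·A), where E_F is Jacobi F-relaxation (E_F = I − D·A with D equal to the identity on F-rows and zero on C-rows), is strictly lower triangular in the original order; in particular E is nilpotent (E^n = 0). -/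
open Matrix

namespace nAIRaux

variable {n : ℕ} {ι κ l : Type*} [Fintype κ]

lemma lo_mul (u : ι → Fin n) (v : κ → Fin n) (w : l → Fin n)
    (M : Matrix ι κ ℝ) (N : Matrix κ l ℝ)
    (hM : ∀ x y, u x < v y → M x y = 0) (hN : ∀ x y, v x < w y → N x y = 0)
    (x : ι) (y : l) (hxy : u x < w y) : (M * N) x y = 0 := by
  rw [Matrix.mul_apply]
  refine Finset.sum_eq_zero fun k _ => ?_
  rcases lt_or_ge (u x) (v k) with h1 | h1
  · rw [hM x k h1, zero_mul]
  · rw [hN k y (lt_of_le_of_lt h1 hxy), mul_zero]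

lemma lo_mul_st (u : ι → Fin n) (v : κ → Fin n) (w : l → Fin n)
    (M : Matrix ι κ ℝ) (N : Matrix κ l ℝ)
    (hM : ∀ x y, u x < v y → M x y = 0) (hN : ∀ x y, v x ≤ w y → N x y = 0)
    (x : ι) (y : l) (hxy : u x ≤ w y) : (M * N) x y = 0 := by
  rw [Matrix.mul_apply]
  refine Finset.sum_eq_zero fun k _ => ?_
  rcases lt_or_ge (u x) (v k) with h1 | h1
  · rw [hM x k h1, zero_mul]
  · rw [hN k y (le_trans h1 hxy), mul_zero]

lemma st_mul_lo (u : ι → Fin n) (v : κ → Fin n) (w : l → Fin n)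
    (M : Matrix ι κ ℝ) (N : Matrix κ l ℝ)
    (hM : ∀ x y, u x ≤ v y → M x y = 0) (hN : ∀ x y, v x < w y → N x y = 0)
    (x : ι) (y : l) (hxy : u x ≤ w y) : (M * N) x y = 0 := by
  rw [Matrix.mul_apply]
  refine Finset.sum_eq_zero fun k _ => ?_
  rcases le_or_gt (u x) (v k) with h1 | h1
  · rw [hM x k h1, zero_mul]
  · rw [hN k y (lt_of_lt_of_le h1 hxy), mul_zero]

lemma lo_mul_diag [DecidableEq κ] (u : ι → Fin n) (v : κ → Fin n) (w : l → Fin n)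
    (M : Matrix ι κ ℝ) (N : Matrix κ l ℝ)
    (hM : ∀ x y, u x < v y → M x y = 0) (hN : ∀ x y, v x < w y → N x y = 0)
    (x : ι) (y : l) (k0 : κ) (heq : u x = w y)
    (hinj : ∀ k, v k = u x → k = k0) :
    (M * N) x y = M x k0 * N k0 y := by
  rw [Matrix.mul_apply]
  refine Finset.sum_eq_single k0 (fun k _ hk => ?_) (fun h => absurd (Finset.mem_univ k0) h)
  rcases lt_trichotomy (u x) (v k) with h1 | h1 | h1
  · rw [hM x k h1, zero_mul]
  · exact absurd (hinj k h1.symm) hk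
  · rw [hN k y (heq ▸ h1), mul_zero]

lemma strict_lower_pow (M : Matrix (Fin n) (Fin n) ℝ)
    (h : ∀ i j, i ≤ j → M i j = 0) : M ^ n = 0 := by
  have key : ∀ k (i j : Fin n), (i : ℕ) < (j : ℕ) + k → (M ^ k) i j = 0 := by
    intro k
    induction k with
    | zero =>
      intro i j hij
      rw [pow_zero]
      exact Matrix.one_apply_ne (by intro he; subst he; omega)
    | succ k ih =>
      intro i j hij
      rw [pow_succ, Matrix.mul_apply]
      refine Finset.sum_eq_zero fun l _ => ?_
      rcases lt_or_ge (i : ℕ) ((l : ℕ) + k) with h1 | h1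
      · rw [ih i l h1, zero_mul]
      · rw [h l j (by rw [Fin.le_def]; omega), mul_zero]
  ext i j
  rw [Matrix.zero_apply]
  exact key n i j (by omega)

end nAIRaux

/-- **Lemma 4.1 (Nilpotent two-grid).** For a lower-triangular matrix `A` with unit diagonal,
a CF-splitting, truncated Neumann approximations `Δ_P`, `Δ_R` of `A_ff⁻¹`, nAIR transfer
operators `W = −Δ_P·A_fc`, `Z = −A_cf·Δ_R`, and Jacobi F-relaxation, the coarse operator
`K = R·A·P` is lower triangular with unit diagonal (hence invertible) and the two-grid
error-propagation matrix `E = E_F·(I − P·K⁻¹·R·A)` is strictly lower triangular,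
hence nilpotent (`E^n = 0`). -/
theorem nAIR_two_grid_nilpotent {n : ℕ}
    (A : Matrix (Fin n) (Fin n) ℝ)
    (hlow : ∀ i j : Fin n, i < j → A i j = 0)
    (hdiag : ∀ i : Fin n, A i i = 1)
    (cpt : Fin n → Bool)
    (Aff : Matrix {i : Fin n // cpt i = false} {i : Fin n // cpt i = false} ℝ)
    (hAff : Aff = A.submatrix Subtype.val Subtype.val)
    (Afc : Matrix {i : Fin n // cpt i = false} {i : Fin n // cpt i = true} ℝ)
    (hAfc : Afc = A.submatrix Subtype.val Subtype.val)
    (Acf : Matrix {i : Fin n // cpt i = true} {i : Fin n // cpt i = false} ℝ)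
    (hAcf : Acf = A.submatrix Subtype.val Subtype.val)
    (Lff : Matrix {i : Fin n // cpt i = false} {i : Fin n // cpt i = false} ℝ)
    (hLff : Lff = 1 - Aff)
    (kP kR : ℕ)
    (ΔP : Matrix {i : Fin n // cpt i = false} {i : Fin n // cpt i = false} ℝ)
    (hΔP : ΔP = ∑ i ∈ Finset.range (kP + 1), Lff ^ i)
    (ΔR : Matrix {i : Fin n // cpt i = false} {i : Fin n // cpt i = false} ℝ)
    (hΔR : ΔR = ∑ i ∈ Finset.range (kR + 1), Lff ^ i)
    (W : Matrix {i : Fin n // cpt i = false} {i : Fin n // cpt i = true} ℝ)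
    (hW : W = -(ΔP * Afc))
    (Z : Matrix {i : Fin n // cpt i = true} {i : Fin n // cpt i = false} ℝ)
    (hZ : Z = -(Acf * ΔR))
    (P : Matrix (Fin n) {i : Fin n // cpt i = true} ℝ)
    (hP : ∀ (i : Fin n) (j : {i : Fin n // cpt i = true}),
      P i j = if h : cpt i = true
        then (1 : Matrix {i : Fin n // cpt i = true} {i : Fin n // cpt i = true} ℝ) ⟨i, h⟩ j
        else W ⟨i, Bool.eq_false_iff.mpr h⟩ j)
    (R : Matrix {i : Fin n // cpt i = true} (Fin n) ℝ)
    (hR : ∀ (j : {i : Fin n // cpt i = true}) (i : Fin n),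
      R j i = if h : cpt i = true
        then (1 : Matrix {i : Fin n // cpt i = true} {i : Fin n // cpt i = true} ℝ) j ⟨i, h⟩
        else Z j ⟨i, Bool.eq_false_iff.mpr h⟩)
    (K : Matrix {i : Fin n // cpt i = true} {i : Fin n // cpt i = true} ℝ)
    (hK : K = R * A * P)
    (D : Matrix (Fin n) (Fin n) ℝ)
    (hD : D = Matrix.diagonal (fun i => if cpt i = true then 0 else 1))
    (EF : Matrix (Fin n) (Fin n) ℝ) (hEF : EF = 1 - D * A)
    (E : Matrix (Fin n) (Fin n) ℝ) (hE : E = EF * (1 - P * K⁻¹ * R * A)) :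
    (∀ x y : {i : Fin n // cpt i = true}, x.val < y.val → K x y = 0) ∧
    (∀ x : {i : Fin n // cpt i = true}, K x x = 1) ∧
    IsUnit K ∧
    (∀ i j : Fin n, i ≤ j → E i j = 0) ∧
    E ^ n = 0 := by
  have hlow' : ∀ i j : Fin n, (id i : Fin n) < id j → A i j = 0 := fun i j h => hlow i j h
  -- submatrix triangularity facts
  have hAfc0 : ∀ (f : {i : Fin n // cpt i = false}) (c : {i : Fin n // cpt i = true}),
      (f : Fin n) ≤ (c : Fin n) → Afc f c = 0 := by
    intro f c h
    rw [hAfc, Matrix.submatrix_apply]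
    rcases lt_or_eq_of_le h with h' | h'
    · exact hlow _ _ h'
    · exfalso
      have h2 := c.prop
      rw [← h', f.prop] at h2
      exact Bool.noConfusion h2
  have hAcf0 : ∀ (c : {i : Fin n // cpt i = true}) (f : {i : Fin n // cpt i = false}),
      (c : Fin n) ≤ (f : Fin n) → Acf c f = 0 := by
    intro c f h
    rw [hAcf, Matrix.submatrix_apply]
    rcases lt_or_eq_of_le h with h' | h'
    · exact hlow _ _ h'
    · exfalso
      have h2 := c.prop
      rw [h', f.prop] at h2
      exact Bool.noConfusion h2
  -- Lff is lower triangular (indeed strictly, but lower suffices)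
  have hLff0 : ∀ f g : {i : Fin n // cpt i = false}, (f : Fin n) < (g : Fin n) → Lff f g = 0 := by
    intro f g h
    rw [hLff, Matrix.sub_apply, hAff, Matrix.submatrix_apply,
      Matrix.one_apply_ne (fun he => absurd (congrArg Subtype.val he) (ne_of_lt h)),
      hlow _ _ h, sub_zero]
  have hNeu : ∀ (m : ℕ) (f g : {i : Fin n // cpt i = false}), (f : Fin n) < (g : Fin n) →
      (∑ i ∈ Finset.range (m + 1), Lff ^ i) f g = 0 := by
    have hpow : ∀ (i : ℕ) (f g : {i : Fin n // cpt i = false}),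
        (f : Fin n) < (g : Fin n) → (Lff ^ i) f g = 0 := by
      intro i
      induction i with
      | zero =>
        intro f g h
        rw [pow_zero]
        exact Matrix.one_apply_ne (fun he => absurd (congrArg Subtype.val he) (ne_of_lt h))
      | succ i ih =>
        intro f g h
        rw [pow_succ]
        exact nAIRaux.lo_mul Subtype.val Subtype.val Subtype.val _ _ ih hLff0 f g h
    intro m f g h
    rw [Matrix.sum_apply]
    exact Finset.sum_eq_zero fun i _ => hpow i f g h
  have hΔPlo : ∀ f g : {i : Fin n // cpt i = false}, (f : Fin n) < (g : Fin n) → ΔP f g = 0 := by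
    intro f g h; rw [hΔP]; exact hNeu kP f g h
  have hΔRlo : ∀ f g : {i : Fin n // cpt i = false}, (f : Fin n) < (g : Fin n) → ΔR f g = 0 := by
    intro f g h; rw [hΔR]; exact hNeu kR f g h
  -- W and Z are strictly triangular
  have hW0 : ∀ (f : {i : Fin n // cpt i = false}) (c : {i : Fin n // cpt i = true}),
      (f : Fin n) ≤ (c : Fin n) → W f c = 0 := by
    intro f c h
    rw [hW, Matrix.neg_apply,
      nAIRaux.lo_mul_st Subtype.val Subtype.val Subtype.val ΔP Afc hΔPlo hAfc0 f c h, neg_zero]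
  have hZ0 : ∀ (c : {i : Fin n // cpt i = true}) (f : {i : Fin n // cpt i = false}),
      (c : Fin n) ≤ (f : Fin n) → Z c f = 0 := by
    intro c f h
    rw [hZ, Matrix.neg_apply,
      nAIRaux.st_mul_lo Subtype.val Subtype.val Subtype.val Acf ΔR hAcf0 hΔRlo c f h, neg_zero]
  -- P entries
  have hP0 : ∀ (i : Fin n) (y : {i : Fin n // cpt i = true}), i < (y : Fin n) → P i y = 0 := by
    intro i y h
    rw [hP i y]
    by_cases hc : cpt i = true
    · rw [dif_pos hc]
      exact Matrix.one_apply_ne (fun he => absurd (congrArg Subtype.val he) (ne_of_lt h))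
    · rw [dif_neg hc]
      exact hW0 _ y (le_of_lt h)
  have hPF : ∀ (i : Fin n) (y : {i : Fin n // cpt i = true}), cpt i = false →
      i ≤ (y : Fin n) → P i y = 0 := by
    intro i y hF h
    rw [hP i y, dif_neg (by simp [hF])]
    exact hW0 _ y h
  have hPC : ∀ (x y : {i : Fin n // cpt i = true}),
      P x.val y = (1 : Matrix {i : Fin n // cpt i = true} {i : Fin n // cpt i = true} ℝ) x y := by
    intro x y
    rw [hP x.val y, dif_pos x.prop]
  -- R entries
  have hRlo : ∀ (x : {i : Fin n // cpt i = true}) (i : Fin n), (x : Fin n) < i → R x i = 0 := by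
    intro x i h
    rw [hR x i]
    by_cases hc : cpt i = true
    · rw [dif_pos hc]
      exact Matrix.one_apply_ne (fun he => absurd (congrArg Subtype.val he) (ne_of_lt h))
    · rw [dif_neg hc]
      exact hZ0 x _ (le_of_lt h)
  have hRF : ∀ (x : {i : Fin n // cpt i = true}) (i : Fin n), cpt i = false →
      (x : Fin n) ≤ i → R x i = 0 := by
    intro x i hF h
    rw [hR x i, dif_neg (by simp [hF])]
    exact hZ0 x _ h
  have hRC : ∀ (x y : {i : Fin n // cpt i = true}),
      R x y.val = (1 : Matrix {i : Fin n // cpt i = true} {i : Fin n // cpt i = true} ℝ) x y := by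
    intro x y
    rw [hR x y.val, dif_pos y.prop]
  -- K is lower triangular with unit diagonal
  have hRA : ∀ (x : {i : Fin n // cpt i = true}) (j : Fin n), (x : Fin n) < id j →
      (R * A) x j = 0 := fun x j h =>
    nAIRaux.lo_mul Subtype.val id id R A hRlo hlow' x j h
  have hKlo : ∀ x y : {i : Fin n // cpt i = true}, x.val < y.val → K x y = 0 := by
    intro x y h
    rw [hK]
    exact nAIRaux.lo_mul Subtype.val id Subtype.val (R * A) P hRA hP0 x y h
  have hKdiag : ∀ x : {i : Fin n // cpt i = true}, K x x = 1 := by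
    intro x
    rw [hK,
      nAIRaux.lo_mul_diag Subtype.val id Subtype.val (R * A) P hRA hP0 x x x.val rfl
        (fun k hk => hk),
      nAIRaux.lo_mul_diag Subtype.val id id R A hRlo hlow' x x.val x.val rfl (fun k hk => hk),
      hRC x x, Matrix.one_apply_eq, hdiag, hPC x x, Matrix.one_apply_eq]
    norm_num
  -- determinant and inverse
  have hbt : K.BlockTriangular OrderDual.toDual := by
    intro i j hij
    exact hKlo i j (Subtype.coe_lt_coe.mpr hij)
  have hdetK : K.det = 1 := by
    rw [Matrix.det_of_lowerTriangular K hbt]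
    exact Finset.prod_eq_one fun x _ => hKdiag x
  have hdetU : IsUnit K.det := by rw [hdetK]; exact isUnit_one
  have hKunit : IsUnit K := (Matrix.isUnit_iff_isUnit_det K).mpr hdetU
  haveI : Invertible K := K.invertibleOfIsUnitDet hdetU
  have hKinvbt := Matrix.blockTriangular_inv_of_blockTriangular hbt
  have hKinvlo : ∀ x y : {i : Fin n // cpt i = true}, (x : Fin n) < (y : Fin n) →
      K⁻¹ x y = 0 := by
    intro x y h
    exact hKinvbt (show OrderDual.toDual y < OrderDual.toDual x from Subtype.coe_lt_coe.mp h)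
  have hKinvdiag : ∀ x : {i : Fin n // cpt i = true}, K⁻¹ x x = 1 := by
    intro x
    have h1 : K * K⁻¹ = 1 := Matrix.mul_nonsing_inv K hdetU
    have h2 := nAIRaux.lo_mul_diag Subtype.val Subtype.val Subtype.val K K⁻¹ hKlo hKinvlo x x x
      rfl (fun k hk => Subtype.ext hk)
    rw [h1, Matrix.one_apply_eq, hKdiag x, one_mul] at h2
    exact h2.symm
  -- the coarse-grid correction matrix
  have hM1lo : ∀ (i : Fin n) (z : {i : Fin n // cpt i = true}), id i < (z : Fin n) →
      (P * K⁻¹) i z = 0 := fun i z h =>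
    nAIRaux.lo_mul id Subtype.val Subtype.val P K⁻¹ hP0 hKinvlo i z h
  have hM1F : ∀ (i : Fin n) (z : {i : Fin n // cpt i = true}), cpt i = false →
      i ≤ (z : Fin n) → (P * K⁻¹) i z = 0 := by
    intro i z hF hle
    rw [Matrix.mul_apply]
    refine Finset.sum_eq_zero fun y _ => ?_
    rcases le_or_gt i (y : Fin n) with h1 | h1
    · rw [hPF i y hF h1, zero_mul]
    · rw [hKinvlo y z (lt_of_lt_of_le h1 hle), mul_zero]
  have hM1C : ∀ (i : Fin n) (h : cpt i = true), (P * K⁻¹) i ⟨i, h⟩ = 1 := by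
    intro i h
    rw [nAIRaux.lo_mul_diag id Subtype.val Subtype.val P K⁻¹ hP0 hKinvlo i ⟨i, h⟩ ⟨i, h⟩ rfl
        (fun k hk => Subtype.ext hk),
      hPC ⟨i, h⟩ ⟨i, h⟩, Matrix.one_apply_eq, hKinvdiag, one_mul]
  have hM2F : ∀ (z : {i : Fin n // cpt i = true}) (i : Fin n), cpt i = false →
      (z : Fin n) ≤ i → (R * A) z i = 0 := by
    intro z i hF hle
    rw [Matrix.mul_apply]
    refine Finset.sum_eq_zero fun k _ => ?_
    rcases lt_or_ge (z : Fin n) k with h1 | h1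
    · rw [hRlo z k h1, zero_mul]
    · rcases lt_or_eq_of_le (le_trans h1 hle) with hlt | he
      · rw [hlow k i hlt, mul_zero]
      · subst he
        rw [hRF z k hF hle, zero_mul]
  have hM2C : ∀ (i : Fin n) (h : cpt i = true), (R * A) ⟨i, h⟩ i = 1 := by
    intro i h
    rw [nAIRaux.lo_mul_diag Subtype.val id id R A hRlo hlow' (⟨i, h⟩ : {i : Fin n // cpt i = true})
        i i rfl (fun k hk => hk),
      hRC ⟨i, h⟩ ⟨i, h⟩, Matrix.one_apply_eq, hdiag, one_mul]
  have hMlo : ∀ i j : Fin n, i < j → ((P * K⁻¹) * (R * A)) i j = 0 := fun i j h =>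
    nAIRaux.lo_mul id Subtype.val id (P * K⁻¹) (R * A) hM1lo hRA i j h
  have hMdiag : ∀ i : Fin n, ((P * K⁻¹) * (R * A)) i i = if cpt i = true then 1 else 0 := by
    intro i
    by_cases h : cpt i = true
    · rw [if_pos h,
        nAIRaux.lo_mul_diag id Subtype.val id (P * K⁻¹) (R * A) hM1lo hRA i i ⟨i, h⟩ rfl
          (fun k hk => Subtype.ext hk),
        hM1C i h, hM2C i h, one_mul]
    · rw [if_neg h]
      have hF : cpt i = false := Bool.eq_false_iff.mpr h
      rw [Matrix.mul_apply]
      refine Finset.sum_eq_zero fun z _ => ?_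
      rcases le_or_gt i (z : Fin n) with h1 | h1
      · rw [hM1F i z hF h1, zero_mul]
      · rw [hM2F z i hF (le_of_lt h1), mul_zero]
  have hassoc : P * K⁻¹ * R * A = (P * K⁻¹) * (R * A) := Matrix.mul_assoc (P * K⁻¹) R A
  have hXlo : ∀ i j : Fin n, i < j →
      ((1 : Matrix (Fin n) (Fin n) ℝ) - P * K⁻¹ * R * A) i j = 0 := by
    intro i j h
    rw [Matrix.sub_apply, Matrix.one_apply_ne (ne_of_lt h), hassoc, hMlo i j h, sub_zero]
  have hXdiag : ∀ i : Fin n,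
      ((1 : Matrix (Fin n) (Fin n) ℝ) - P * K⁻¹ * R * A) i i = if cpt i = true then 0 else 1 := by
    intro i
    rw [Matrix.sub_apply, Matrix.one_apply_eq, hassoc, hMdiag i]
    by_cases h : cpt i = true <;> simp [h]
  have hEFlo : ∀ i j : Fin n, i < j → EF i j = 0 := by
    intro i j h
    rw [hEF, hD, Matrix.sub_apply, Matrix.one_apply_ne (ne_of_lt h), Matrix.diagonal_mul,
      hlow i j h, mul_zero, sub_zero]
  have hEFdiag : ∀ i : Fin n, EF i i = if cpt i = true then 1 else 0 := by
    intro i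
    rw [hEF, hD, Matrix.sub_apply, Matrix.one_apply_eq, Matrix.diagonal_mul, hdiag]
    by_cases h : cpt i = true <;> simp [h]
  have hEle : ∀ i j : Fin n, i ≤ j → E i j = 0 := by
    intro i j hij
    rw [hE]
    rcases lt_or_eq_of_le hij with h | h
    · exact nAIRaux.lo_mul id id id EF (1 - P * K⁻¹ * R * A)
        (fun x y hh => hEFlo x y hh) (fun x y hh => hXlo x y hh) i j h
    · subst h
      rw [nAIRaux.lo_mul_diag id id id EF (1 - P * K⁻¹ * R * A)
          (fun x y hh => hEFlo x y hh) (fun x y hh => hXlo x y hh) i i i rfl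
          (fun k hk => hk),
        hEFdiag i, hXdiag i]
      by_cases h : cpt i = true <;> simp [h]
  exact ⟨hKlo, hKdiag, hKunit, hEle, nAIRaux.strict_lower_pow E hEle⟩
end

section
/- In the setting of the nilpotent two-grid lemma — A an n×n real lower-triangular matrix with unit diagonal, a CF-splitting of {1,…,n}, L_ff = I − A_ff, W = −Δ_P·A_fc and Z = −A_cf·Δ_R with Δ_P, Δ_R truncated Neumann sums Σ_{i=0}^{k} L_ff^i, P and R the corresponding interpolation/restriction, K = R·A·P (which is lower triangular with unit diagonal, hence invertible), and E_F Jacobi F-relaxation — let E_c be any C×C matrix such that E_c·K⁻¹ is strictly lower triangular in the order inherited on the C-points. Then the inexact (multilevel) two-grid error propagation E_F·[(I − P·K⁻¹·R·A) + P·E_c·K⁻¹·R·A] is strictly lower triangular in the original order on {1,…,n}, and hence nilpotent. -/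
open Matrix

section NilpotentHelpers

variable {β γ δ : Type*} [Fintype γ]

/-- product of lower-triangular (w.r.t. height functions) matrices is lower triangular -/
lemma low_mul_low {v : β → ℕ} {w : γ → ℕ} {u : δ → ℕ}
    {M : Matrix β γ ℝ} {N : Matrix γ δ ℝ}
    (hM : ∀ i k, v i < w k → M i k = 0) (hN : ∀ k j, w k < u j → N k j = 0) :
    ∀ i j, v i < u j → (M * N) i j = 0 := by
  intro i j hij
  rw [Matrix.mul_apply]
  refine Finset.sum_eq_zero fun k _ => ?_
  by_cases h : v i < w k
  · rw [hM i k h, zero_mul]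
  · rw [hN k j (lt_of_le_of_lt (not_lt.1 h) hij), mul_zero]

lemma slow_mul_slow {v : β → ℕ} {w : γ → ℕ} {u : δ → ℕ}
    {M : Matrix β γ ℝ} {N : Matrix γ δ ℝ}
    (hM : ∀ i k, v i ≤ w k → M i k = 0) (hN : ∀ k j, w k ≤ u j → N k j = 0) :
    ∀ i j, v i ≤ u j → (M * N) i j = 0 := by
  intro i j hij
  rw [Matrix.mul_apply]
  refine Finset.sum_eq_zero fun k _ => ?_
  by_cases h : v i ≤ w k
  · rw [hM i k h, zero_mul]
  · rw [hN k j (le_of_lt (lt_of_lt_of_le (not_le.1 h) hij)), mul_zero]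

lemma low_mul_slow {v : β → ℕ} {w : γ → ℕ} {u : δ → ℕ}
    {M : Matrix β γ ℝ} {N : Matrix γ δ ℝ}
    (hM : ∀ i k, v i < w k → M i k = 0) (hN : ∀ k j, w k ≤ u j → N k j = 0) :
    ∀ i j, v i ≤ u j → (M * N) i j = 0 := by
  intro i j hij
  rw [Matrix.mul_apply]
  refine Finset.sum_eq_zero fun k _ => ?_
  by_cases h : v i < w k
  · rw [hM i k h, zero_mul]
  · rw [hN k j (le_trans (not_lt.1 h) hij), mul_zero]

lemma slow_mul_low {v : β → ℕ} {w : γ → ℕ} {u : δ → ℕ}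
    {M : Matrix β γ ℝ} {N : Matrix γ δ ℝ}
    (hM : ∀ i k, v i ≤ w k → M i k = 0) (hN : ∀ k j, w k < u j → N k j = 0) :
    ∀ i j, v i ≤ u j → (M * N) i j = 0 := by
  intro i j hij
  rw [Matrix.mul_apply]
  refine Finset.sum_eq_zero fun k _ => ?_
  by_cases h : v i ≤ w k
  · rw [hM i k h, zero_mul]
  · rw [hN k j (lt_of_lt_of_le (not_le.1 h) hij), mul_zero]

lemma mul_apply_diag {v : β → ℕ} {w : γ → ℕ} {u : δ → ℕ}
    {M : Matrix β γ ℝ} {N : Matrix γ δ ℝ}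
    (hM : ∀ i k, v i < w k → M i k = 0) (hN : ∀ k j, w k < u j → N k j = 0)
    (i : β) (j : δ) (k0 : γ) (h1 : v i = u j)
    (hk0 : ∀ k, w k = v i → k = k0) :
    (M * N) i j = M i k0 * N k0 j := by
  rw [Matrix.mul_apply]
  refine Finset.sum_eq_single_of_mem k0 (Finset.mem_univ _) fun k _ hk => ?_
  rcases lt_trichotomy (v i) (w k) with h | h | h
  · rw [hM i k h, zero_mul]
  · exact absurd (hk0 k h.symm) hk
  · rw [hN k j (lt_of_lt_of_le h (le_of_eq h1)), mul_zero]

lemma slow_pow {β : Type*} [Fintype β] [DecidableEq β] {v : β → ℕ} {S : Matrix β β ℝ}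
    (hS : ∀ i j, v i ≤ v j → S i j = 0) :
    ∀ k, 1 ≤ k → ∀ i j, v i ≤ v j → (S ^ k) i j = 0 := by
  intro k
  induction k with
  | zero => intro h; exact absurd h (by norm_num)
  | succ k ih =>
    intro _ i j hij
    rcases Nat.eq_zero_or_pos k with rfl | hk
    · rw [pow_one]; exact hS i j hij
    · rw [pow_succ]; exact slow_mul_slow (ih hk) hS i j hij

lemma slow_pow_bound {β : Type*} [Fintype β] [DecidableEq β] {v : β → ℕ} {S : Matrix β β ℝ}
    (hS : ∀ i j, v i ≤ v j → S i j = 0) :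
    ∀ k (i j : β), v i < v j + k → (S ^ k) i j = 0 := by
  intro k
  induction k with
  | zero =>
    intro i j h
    rw [pow_zero, Matrix.one_apply_ne]
    rintro rfl; omega
  | succ k ih =>
    intro i j h
    rw [pow_succ, Matrix.mul_apply]
    refine Finset.sum_eq_zero fun l _ => ?_
    by_cases hl : v i < v l + k
    · rw [ih i l hl, zero_mul]
    · rw [hS l j (by omega), mul_zero]

end NilpotentHelpers

/-- **Theorem 4.2 (Nilpotent AMG).** In the setting of the nilpotent two-grid lemma, if the
coarse-grid error propagator `E_c` is such that `E_c·K⁻¹` is strictly lower triangular in the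
order inherited on the C-points, then the inexact (multilevel) two-grid error propagation
`E_F·[(I − P·K⁻¹·R·A) + P·E_c·K⁻¹·R·A]` is strictly lower triangular, hence nilpotent. -/
theorem nAIR_multilevel_nilpotent {n : ℕ}
    (A : Matrix (Fin n) (Fin n) ℝ)
    (hlow : ∀ i j : Fin n, i < j → A i j = 0)
    (hdiag : ∀ i : Fin n, A i i = 1)
    (cpt : Fin n → Bool)
    (Aff : Matrix {i : Fin n // cpt i = false} {i : Fin n // cpt i = false} ℝ)
    (hAff : Aff = A.submatrix Subtype.val Subtype.val)
    (Afc : Matrix {i : Fin n // cpt i = false} {i : Fin n // cpt i = true} ℝ)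
    (hAfc : Afc = A.submatrix Subtype.val Subtype.val)
    (Acf : Matrix {i : Fin n // cpt i = true} {i : Fin n // cpt i = false} ℝ)
    (hAcf : Acf = A.submatrix Subtype.val Subtype.val)
    (Lff : Matrix {i : Fin n // cpt i = false} {i : Fin n // cpt i = false} ℝ)
    (hLff : Lff = 1 - Aff)
    (kP kR : ℕ)
    (ΔP : Matrix {i : Fin n // cpt i = false} {i : Fin n // cpt i = false} ℝ)
    (hΔP : ΔP = ∑ i ∈ Finset.range (kP + 1), Lff ^ i)
    (ΔR : Matrix {i : Fin n // cpt i = false} {i : Fin n // cpt i = false} ℝ)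
    (hΔR : ΔR = ∑ i ∈ Finset.range (kR + 1), Lff ^ i)
    (W : Matrix {i : Fin n // cpt i = false} {i : Fin n // cpt i = true} ℝ)
    (hW : W = -(ΔP * Afc))
    (Z : Matrix {i : Fin n // cpt i = true} {i : Fin n // cpt i = false} ℝ)
    (hZ : Z = -(Acf * ΔR))
    (P : Matrix (Fin n) {i : Fin n // cpt i = true} ℝ)
    (hP : ∀ (i : Fin n) (j : {i : Fin n // cpt i = true}),
      P i j = if h : cpt i = true
        then (1 : Matrix {i : Fin n // cpt i = true} {i : Fin n // cpt i = true} ℝ) ⟨i, h⟩ j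
        else W ⟨i, Bool.eq_false_iff.mpr h⟩ j)
    (R : Matrix {i : Fin n // cpt i = true} (Fin n) ℝ)
    (hR : ∀ (j : {i : Fin n // cpt i = true}) (i : Fin n),
      R j i = if h : cpt i = true
        then (1 : Matrix {i : Fin n // cpt i = true} {i : Fin n // cpt i = true} ℝ) j ⟨i, h⟩
        else Z j ⟨i, Bool.eq_false_iff.mpr h⟩)
    (K : Matrix {i : Fin n // cpt i = true} {i : Fin n // cpt i = true} ℝ)
    (hK : K = R * A * P)
    (D : Matrix (Fin n) (Fin n) ℝ)
    (hD : D = Matrix.diagonal (fun i => if cpt i = true then 0 else 1))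
    (EF : Matrix (Fin n) (Fin n) ℝ) (hEF : EF = 1 - D * A)
    (Ec : Matrix {i : Fin n // cpt i = true} {i : Fin n // cpt i = true} ℝ)
    (hEc : ∀ x y : {i : Fin n // cpt i = true}, x.val ≤ y.val → (Ec * K⁻¹) x y = 0)
    (E : Matrix (Fin n) (Fin n) ℝ)
    (hE : E = EF * ((1 - P * K⁻¹ * R * A) + P * Ec * K⁻¹ * R * A)) :
    (∀ i j : Fin n, i ≤ j → E i j = 0) ∧ E ^ n = 0 := by
  -- notation
  have hlow' : ∀ i j : Fin n, (i : ℕ) < (j : ℕ) → A i j = 0 := fun i j h => hlow i j h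
  -- Aff / Afc / Acf structure
  have hAfc' : ∀ (f : {i : Fin n // cpt i = false}) (c : {i : Fin n // cpt i = true}),
      (f.1 : ℕ) ≤ (c.1 : ℕ) → Afc f c = 0 := by
    intro f c h
    rw [hAfc, Matrix.submatrix_apply]
    rcases lt_or_eq_of_le h with h' | h'
    · exact hlow' _ _ h'
    · exfalso
      have hf := f.2
      rw [show f.1 = c.1 from Fin.ext h', c.2] at hf
      exact Bool.noConfusion hf
  -- Lff is strictly lower triangular
  have hLffS : ∀ f g : {i : Fin n // cpt i = false}, (f.1 : ℕ) ≤ (g.1 : ℕ) → Lff f g = 0 := by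
    intro f g h
    rw [hLff, Matrix.sub_apply]
    rcases lt_or_eq_of_le h with h' | h'
    · rw [Matrix.one_apply_ne (by intro e; rw [e] at h'; exact lt_irrefl _ h'),
        hAff, Matrix.submatrix_apply, hlow' _ _ h', sub_zero]
    · have hfg : f = g := Subtype.ext (Fin.ext h')
      subst hfg
      rw [Matrix.one_apply_eq, hAff, Matrix.submatrix_apply, hdiag, sub_self]
  -- ΔP is lower triangular with unit diagonal
  have hΔP_low : ∀ f g : {i : Fin n // cpt i = false}, (f.1 : ℕ) < (g.1 : ℕ) → ΔP f g = 0 := by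
    intro f g h
    rw [hΔP, Matrix.sum_apply]
    refine Finset.sum_eq_zero fun i _ => ?_
    rcases Nat.eq_zero_or_pos i with rfl | hi
    · rw [pow_zero, Matrix.one_apply_ne (by intro e; rw [e] at h; exact lt_irrefl _ h)]
    · exact slow_pow hLffS i hi f g (le_of_lt h)
  -- W is strictly lower triangular
  have hWlow : ∀ (f : {i : Fin n // cpt i = false}) (c : {i : Fin n // cpt i = true}),
      (f.1 : ℕ) ≤ (c.1 : ℕ) → W f c = 0 := by
    intro f c h
    rw [hW, Matrix.neg_apply, neg_eq_zero]
    exact low_mul_slow hΔP_low hAfc' f c h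
  -- Z is strictly lower triangular (not needed beyond R's lower triangularity)
  have hZlow : ∀ (c : {i : Fin n // cpt i = true}) (f : {i : Fin n // cpt i = false}),
      (c.1 : ℕ) ≤ (f.1 : ℕ) → Z c f = 0 := by
    intro c f h
    rw [hZ, Matrix.neg_apply, neg_eq_zero]
    have hAcf' : ∀ (c : {i : Fin n // cpt i = true}) (f : {i : Fin n // cpt i = false}),
        (c.1 : ℕ) ≤ (f.1 : ℕ) → Acf c f = 0 := by
      intro c f h
      rw [hAcf, Matrix.submatrix_apply]
      rcases lt_or_eq_of_le h with h' | h'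
      · exact hlow' _ _ h'
      · exfalso
        have : c.1 = f.1 := Fin.ext h'
        have hc := c.2
        rw [this, f.2] at hc
        exact Bool.noConfusion hc
    have hΔR_low : ∀ f g : {i : Fin n // cpt i = false}, (f.1 : ℕ) < (g.1 : ℕ) → ΔR f g = 0 := by
      intro f g h
      rw [hΔR, Matrix.sum_apply]
      refine Finset.sum_eq_zero fun i _ => ?_
      rcases Nat.eq_zero_or_pos i with rfl | hi
      · rw [pow_zero, Matrix.one_apply_ne (by intro e; rw [e] at h; exact lt_irrefl _ h)]
      · exact slow_pow hLffS i hi f g (le_of_lt h)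
    exact slow_mul_low hAcf' hΔR_low c f h
  -- P structure
  have hP_low : ∀ (i : Fin n) (y : {i : Fin n // cpt i = true}),
      (i : ℕ) < (y.1 : ℕ) → P i y = 0 := by
    intro i y h
    rw [hP]
    split
    · exact Matrix.one_apply_ne (by intro e; rw [← e] at h; exact lt_irrefl _ h)
    · exact hWlow _ _ (le_of_lt h)
  have hP_slow : ∀ (i : Fin n) (y : {i : Fin n // cpt i = true}), cpt i = false →
      (i : ℕ) ≤ (y.1 : ℕ) → P i y = 0 := by
    intro i y hc h
    rw [hP, dif_neg (by simp [hc])]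
    exact hWlow _ _ h
  have hP_diag : ∀ (i : Fin n) (h : cpt i = true), P i ⟨i, h⟩ = 1 := by
    intro i h
    rw [hP, dif_pos h]
    exact Matrix.one_apply_eq _
  -- R structure
  have hR_low : ∀ (y : {i : Fin n // cpt i = true}) (i : Fin n),
      (y.1 : ℕ) < (i : ℕ) → R y i = 0 := by
    intro y i h
    rw [hR]
    split
    · exact Matrix.one_apply_ne (by intro e; rw [e] at h; exact lt_irrefl _ h)
    · exact hZlow _ _ (le_of_lt h)
  have hR_diag : ∀ (i : Fin n) (h : cpt i = true), R ⟨i, h⟩ i = 1 := by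
    intro i h
    rw [hR, dif_pos h]
    exact Matrix.one_apply_eq _
  -- the middle-index uniqueness helpers
  have huniqC : ∀ (i : Fin n) (h : cpt i = true) (y : {i : Fin n // cpt i = true}),
      (y.1 : ℕ) = (i : ℕ) → y = ⟨i, h⟩ := by
    intro i h y hy
    exact Subtype.ext (Fin.ext hy)
  have huniqF : ∀ (i : Fin n) (k : Fin n), (k : ℕ) = (i : ℕ) → k = i := fun i k hk => Fin.ext hk
  -- R*A is lower triangular with the right diagonal
  have hRA_low : ∀ (y : {i : Fin n // cpt i = true}) (j : Fin n),
      (y.1 : ℕ) < (j : ℕ) → (R * A) y j = 0 := low_mul_low hR_low hlow'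
  have hRA_diag : ∀ (i : Fin n) (h : cpt i = true), (R * A) ⟨i, h⟩ i = 1 := by
    intro i h
    rw [mul_apply_diag hR_low hlow' ⟨i, h⟩ i i rfl (huniqF i), hR_diag i h, hdiag, one_mul]
  -- K is lower triangular with unit diagonal
  have hK_low : ∀ x y : {i : Fin n // cpt i = true}, (x.1 : ℕ) < (y.1 : ℕ) → K x y = 0 := by
    intro x y h
    rw [hK]
    exact low_mul_low hRA_low hP_low x y h
  have hK_diag : ∀ x : {i : Fin n // cpt i = true}, K x x = 1 := by
    intro x
    rw [hK, mul_apply_diag hRA_low hP_low x x x.1 rfl (huniqF x.1)]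
    have h1 : (⟨x.1, x.2⟩ : {i : Fin n // cpt i = true}) = x := Subtype.ext rfl
    have h2 := hRA_diag x.1 x.2
    have h3 := hP_diag x.1 x.2
    rw [h1] at h2 h3
    rw [h2, h3, one_mul]
  -- S := 1 - K is strictly lower triangular
  have hS : ∀ x y : {i : Fin n // cpt i = true}, (x.1 : ℕ) ≤ (y.1 : ℕ) →
      ((1 : Matrix {i : Fin n // cpt i = true} {i : Fin n // cpt i = true} ℝ) - K) x y = 0 := by
    intro x y h
    rw [Matrix.sub_apply]
    rcases lt_or_eq_of_le h with h' | h'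
    · rw [Matrix.one_apply_ne (by intro e; rw [e] at h'; exact lt_irrefl _ h'),
        hK_low x y h', sub_zero]
    · have hxy : x = y := Subtype.ext (Fin.ext h')
      subst hxy
      rw [Matrix.one_apply_eq, hK_diag, sub_self]
  set S : Matrix {i : Fin n // cpt i = true} {i : Fin n // cpt i = true} ℝ :=
    (1 : Matrix _ _ ℝ) - K with hSdef
  have hSn : S ^ n = 0 := by
    ext x y
    rw [Matrix.zero_apply]
    exact slow_pow_bound hS n x y (by have := x.1.isLt; omega)
  -- K⁻¹ is the Neumann series, lower triangular with unit diagonal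
  have hKK' : K * (∑ i ∈ Finset.range n, S ^ i) = 1 := by
    have h1 : K = 1 - S := by rw [hSdef, sub_sub_cancel]
    rw [h1, ← neg_sub S 1, neg_mul, mul_geom_sum, hSn, zero_sub, neg_neg]
  have hKinv : K⁻¹ = ∑ i ∈ Finset.range n, S ^ i := Matrix.inv_eq_right_inv hKK'
  have hKinv_low : ∀ x y : {i : Fin n // cpt i = true}, (x.1 : ℕ) < (y.1 : ℕ) → K⁻¹ x y = 0 := by
    intro x y h
    rw [hKinv, Matrix.sum_apply]
    refine Finset.sum_eq_zero fun i _ => ?_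
    rcases Nat.eq_zero_or_pos i with rfl | hi
    · rw [pow_zero, Matrix.one_apply_ne (by intro e; rw [e] at h; exact lt_irrefl _ h)]
    · exact slow_pow hS i hi x y (le_of_lt h)
  have hKinv_diag : ∀ x : {i : Fin n // cpt i = true}, K⁻¹ x x = 1 := by
    intro x
    rw [hKinv, Matrix.sum_apply,
      Finset.sum_eq_single_of_mem 0 (Finset.mem_range.mpr x.1.pos)
        (fun b _ hb => slow_pow hS b (Nat.one_le_iff_ne_zero.mpr hb) x x le_rfl),
      pow_zero]
    exact Matrix.one_apply_eq _
  -- G := K⁻¹ - Ec * K⁻¹ is lower triangular with unit diagonal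
  set G : Matrix {i : Fin n // cpt i = true} {i : Fin n // cpt i = true} ℝ :=
    K⁻¹ - Ec * K⁻¹ with hGdef
  have hG_low : ∀ x y : {i : Fin n // cpt i = true}, (x.1 : ℕ) < (y.1 : ℕ) → G x y = 0 := by
    intro x y h
    rw [hGdef, Matrix.sub_apply, hKinv_low x y h, hEc x y (le_of_lt h), sub_zero]
  have hG_diag : ∀ x : {i : Fin n // cpt i = true}, G x x = 1 := by
    intro x
    rw [hGdef, Matrix.sub_apply, hKinv_diag, hEc x x le_rfl, sub_zero]
  -- P * G structure
  have hPG_low : ∀ (i : Fin n) (y : {i : Fin n // cpt i = true}),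
      (i : ℕ) < (y.1 : ℕ) → (P * G) i y = 0 := low_mul_low hP_low hG_low
  have hPG_slow : ∀ (i : Fin n) (y : {i : Fin n // cpt i = true}), cpt i = false →
      (i : ℕ) ≤ (y.1 : ℕ) → (P * G) i y = 0 := by
    intro i y hc h
    rw [Matrix.mul_apply]
    refine Finset.sum_eq_zero fun z _ => ?_
    by_cases hz : (i : ℕ) ≤ (z.1 : ℕ)
    · rw [hP_slow i z hc hz, zero_mul]
    · rw [hG_low z y (lt_of_lt_of_le (not_le.1 hz) h), mul_zero]
  have hPG_diag : ∀ (i : Fin n) (h : cpt i = true), (P * G) i ⟨i, h⟩ = 1 := by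
    intro i h
    rw [mul_apply_diag hP_low hG_low i ⟨i, h⟩ ⟨i, h⟩ rfl (huniqC i h),
      hP_diag i h, hG_diag, one_mul]
  -- Q := (P*G)*(R*A) structure
  have hQ_low : ∀ i j : Fin n, (i : ℕ) < (j : ℕ) → ((P * G) * (R * A)) i j = 0 :=
    low_mul_low hPG_low hRA_low
  have hQ_diagC : ∀ (i : Fin n) (h : cpt i = true), ((P * G) * (R * A)) i i = 1 := by
    intro i h
    rw [mul_apply_diag hPG_low hRA_low i i ⟨i, h⟩ rfl (fun y hy => huniqC i h y hy),
      hPG_diag i h, hRA_diag i h, one_mul]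
  have hQ_diagF : ∀ i : Fin n, cpt i = false → ((P * G) * (R * A)) i i = 0 := by
    intro i hc
    rw [Matrix.mul_apply]
    refine Finset.sum_eq_zero fun y _ => ?_
    by_cases hy : (i : ℕ) ≤ (y.1 : ℕ)
    · rw [hPG_slow i y hc hy, zero_mul]
    · rw [hRA_low y i (not_le.1 hy), mul_zero]
  -- rewrite the bracket
  have hbracket : (1 - P * K⁻¹ * R * A) + P * Ec * K⁻¹ * R * A
      = 1 - (P * G) * (R * A) := by
    rw [hGdef]
    simp only [Matrix.mul_sub, Matrix.sub_mul, Matrix.mul_assoc]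
    abel
  have hE' : E = EF * (1 - (P * G) * (R * A)) := by rw [hE, hbracket]
  -- EF structure
  have hEF_low : ∀ i j : Fin n, (i : ℕ) < (j : ℕ) → EF i j = 0 := by
    intro i j h
    rw [hEF, Matrix.sub_apply, hD, Matrix.diagonal_mul,
      Matrix.one_apply_ne (by intro e; rw [e] at h; exact lt_irrefl _ h),
      hlow' i j h, mul_zero, sub_zero]
  have hEF_diagF : ∀ i : Fin n, cpt i = false → EF i i = 0 := by
    intro i hc
    rw [hEF, Matrix.sub_apply, hD, Matrix.diagonal_mul, Matrix.one_apply_eq, hdiag]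
    simp [hc]
  -- main strict-lower-triangularity
  have hE_slow : ∀ i j : Fin n, (i : ℕ) ≤ (j : ℕ) → E i j = 0 := by
    intro i j hij
    rw [hE', Matrix.mul_apply]
    refine Finset.sum_eq_zero fun l _ => ?_
    by_cases h1 : (i : ℕ) < (l : ℕ)
    · rw [hEF_low i l h1, zero_mul]
    · by_cases h2 : (l : ℕ) < (j : ℕ)
      · rw [Matrix.sub_apply, Matrix.one_apply_ne (by intro e; rw [e] at h2; exact lt_irrefl _ h2),
          hQ_low l j h2, sub_zero, mul_zero]
      · have hl : l = j := Fin.ext (by omega)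
        have hij' : i = j := Fin.ext (by omega)
        subst hl; subst hij'
        rcases Bool.eq_false_or_eq_true (cpt i) with hc | hc
        · rw [Matrix.sub_apply, Matrix.one_apply_eq, hQ_diagC i hc, sub_self, mul_zero]
        · rw [hEF_diagF i hc, zero_mul]
  refine ⟨fun i j hij => hE_slow i j hij, ?_⟩
  ext i j
  rw [Matrix.zero_apply]
  exact slow_pow_bound hE_slow n i j (by have := i.isLt; omega)
end
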